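/- arXiv:2412.07164 — 8 statements merged into one kernel-verified Lean document; each statement's English description precedes it below -/
import Mathlib

section
/- For a finite poset P on [p], the number of lattice points of the t-th dilate of the order polytope equals the number of order-preserving maps from P to the (t+1)-element chain; that is, |tO(P) ∩ ℤ^p| = Ω_P(t+1) for all positive integers t. -/
open Pointwise

def orderPolytope (p : ℕ) (r : Fin p → Fin p → Prop) : Set (Fin p → ℝ) :=
  {x | (∀ i, 0 ≤ x i ∧ x i ≤ 1) ∧ ∀ i j, r i j → x i ≤ x j}

/-- |tO(P) ∩ ℤ^p| equals the number of order-preserving maps from P to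
the (t+1)-element chain, i.e. Ω_P(t+1). -/
theorem card_latticePoints_dilate_orderPolytope (p : ℕ) (r : Fin p → Fin p → Prop)
    (hr : IsPartialOrder (Fin p) r) (t : ℕ) (ht : 1 ≤ t) :
    Set.ncard {x : Fin p → ℤ | (fun i => (x i : ℝ)) ∈ (t : ℝ) • orderPolytope p r} =
      Nat.card {f : Fin p → Fin (t + 1) // ∀ i j, r i j → f i ≤ f j} := by
  have ht' : (0:ℝ) < t := by positivity
  have key : ∀ x : Fin p → ℤ, ((fun i => (x i : ℝ)) ∈ (t : ℝ) • orderPolytope p r) ↔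
      ((∀ i, 0 ≤ x i ∧ x i ≤ (t:ℤ)) ∧ ∀ i j, r i j → x i ≤ x j) := by
    intro x
    rw [Set.mem_smul_set_iff_inv_smul_mem₀ ht'.ne']
    simp only [orderPolytope, Set.mem_setOf_eq, Pi.smul_apply, smul_eq_mul]
    constructor
    · rintro ⟨h1, h2⟩
      refine ⟨fun i => ?_, fun i j hij => ?_⟩
      · obtain ⟨ha, hb⟩ := h1 i
        constructor
        · have : (0:ℝ) ≤ (x i : ℝ) := by
            have := mul_le_mul_of_nonneg_left ha ht'.le
            simpa [← mul_assoc, mul_inv_cancel₀ ht'.ne'] using this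
          exact_mod_cast this
        · have : (x i : ℝ) ≤ t := by
            have := mul_le_mul_of_nonneg_left hb ht'.le
            simpa [← mul_assoc, mul_inv_cancel₀ ht'.ne'] using this
          exact_mod_cast this
      · have h := h2 i j hij
        have : (x i : ℝ) ≤ x j := by
          have := mul_le_mul_of_nonneg_left h ht'.le
          simpa [← mul_assoc, mul_inv_cancel₀ ht'.ne'] using this
        exact_mod_cast this
    · rintro ⟨h1, h2⟩
      refine ⟨fun i => ?_, fun i j hij => ?_⟩
      · obtain ⟨ha, hb⟩ := h1 i
        have ha' : (0:ℝ) ≤ (x i : ℝ) := by exact_mod_cast ha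
        have hb' : (x i : ℝ) ≤ t := by exact_mod_cast hb
        constructor
        · positivity
        · rw [inv_mul_le_iff₀ ht', mul_one]; exact hb'
      · have h : (x i : ℝ) ≤ x j := by exact_mod_cast h2 i j hij
        exact mul_le_mul_of_nonneg_left h (by positivity)
  have hset : {x : Fin p → ℤ | (fun i => (x i : ℝ)) ∈ (t : ℝ) • orderPolytope p r} =
      {x : Fin p → ℤ | (∀ i, 0 ≤ x i ∧ x i ≤ (t:ℤ)) ∧ ∀ i j, r i j → x i ≤ x j} := by
    ext x; exact key x
  rw [hset, ← Nat.card_coe_set_eq]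
  apply Nat.card_congr
  refine ⟨fun x => ⟨fun i => ⟨(x.1 i).toNat, ?_⟩, fun i j hij => ?_⟩,
    fun f => ⟨fun i => (f.1 i : ℤ), ⟨fun i => ⟨by positivity, ?_⟩, fun i j hij => ?_⟩⟩, ?_, ?_⟩
  · obtain ⟨h1, _⟩ := x.2
    obtain ⟨ha, hb⟩ := h1 i
    omega
  · obtain ⟨h1, h2⟩ := x.2
    have := h2 i j hij
    have := (h1 i).1
    simp only [Fin.mk_le_mk]
    omega
  · have := (f.1 i).isLt
    exact_mod_cast Nat.cast_le.mpr (Nat.lt_succ_iff.mp this)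
  · exact_mod_cast Nat.cast_le.mpr (f.2 i j hij)
  · rintro ⟨x, hx⟩
    ext i
    simp only
    have := (hx.1 i).1
    omega
  · rintro ⟨f, hf⟩
    ext i
    simp
end

section
/- If a polynomial f(x) with nonnegative real coefficients has only real roots, then its coefficient sequence is log-concave: a_i^2 ≥ a_{i-1} a_{i+1} for all 1 ≤ i ≤ deg f − 1. -/
open Polynomial

/-- Strong log-concavity of the coefficient sequence. -/
def SLC (p : Polynomial ℝ) : Prop :=
  ∀ j k : ℕ, j ≤ k → p.coeff j * p.coeff (k+2) ≤ p.coeff (j+1) * p.coeff (k+1)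

lemma SLC.chain {p : Polynomial ℝ} (h : SLC p) {j k : ℕ} (hjk : j ≤ k) :
    p.coeff j * p.coeff (k+3) ≤ p.coeff (j+2) * p.coeff (k+1) := by
  rcases eq_or_lt_of_le hjk with rfl | hlt
  · have h1 := h j (j+1) (by omega)
    have : j+1+2 = j+3 := by omega
    rw [this] at h1
    nlinarith [h1]
  · have h1 := h j (k+1) (by omega)
    have h2 := h (j+1) k (by omega)
    have : k+1+2 = k+3 := by omega
    rw [this] at h1
    nlinarith [h1, h2]

lemma mul_step {p : Polynomial ℝ} {r : ℝ} (hr : 0 ≤ r)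
    (hp : ∀ i, 0 ≤ p.coeff i) (hS : SLC p) :
    (∀ i, 0 ≤ ((X + C r) * p).coeff i) ∧ SLC ((X + C r) * p) := by
  have hq0 : ((X + C r) * p).coeff 0 = r * p.coeff 0 := by
    simp [add_mul, mul_coeff_zero]
  have hq : ∀ i : ℕ, ((X + C r) * p).coeff (i+1) = p.coeff i + r * p.coeff (i+1) := by
    intro i
    simp [add_mul, coeff_X_mul, coeff_C_mul]
  constructor
  · intro i
    cases i with
    | zero => rw [hq0]; exact mul_nonneg hr (hp 0)
    | succ n => rw [hq]; have := hp n; have := hp (n+1); positivity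
  · intro j k hjk
    cases j with
    | zero =>
      rw [hq0]
      have e1 : k + 2 = (k+1) + 1 := by omega
      rw [e1, hq (k+1), show (0:ℕ)+1 = 0+1 from rfl, hq 0, hq k]
      have h0 := hS 0 k (Nat.zero_le k)
      nlinarith [mul_nonneg (mul_nonneg hr hr) (sub_nonneg.mpr h0),
        mul_nonneg (hp 0) (hp k), mul_nonneg hr (mul_nonneg (hp 1) (hp k))]
    | succ j' =>
      obtain ⟨k', rfl⟩ : ∃ k', k = k' + 1 := ⟨k - 1, by omega⟩
      have hjk' : j' ≤ k' := by omega
      have e1 : k' + 1 + 2 = (k'+2) + 1 := by omega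
      have e2 : j' + 1 + 1 = (j'+1) + 1 := rfl
      rw [e1, hq (j'), hq (k'+2), e2, hq (j'+1), hq (k'+1)]
      have h1 := hS j' k' hjk'
      have h2 := hS (j'+1) (k'+1) (by omega)
      have h3 := hS.chain hjk'
      have e3 : k'+1+2 = k'+3 := by omega
      rw [e3] at h2
      nlinarith [h1, mul_nonneg hr (sub_nonneg.mpr h3),
        mul_nonneg (mul_nonneg hr hr) (sub_nonneg.mpr h2)]

lemma key (s : Multiset ℝ) (hs : ∀ r ∈ s, 0 ≤ r) (c : ℝ) (hc : 0 ≤ c) :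
    (∀ i, 0 ≤ (C c * (s.map (fun r => X + C r)).prod).coeff i) ∧
      SLC (C c * (s.map (fun r => X + C r)).prod) := by
  induction s using Multiset.induction with
  | empty =>
    simp only [Multiset.map_zero, Multiset.prod_zero, mul_one]
    constructor
    · intro i; rw [coeff_C]; split <;> simp [hc]
    · intro j k hjk
      rw [coeff_C, coeff_C, coeff_C, coeff_C]
      simp
  | cons r t ih =>
    have hr : 0 ≤ r := hs r (Multiset.mem_cons_self r t)
    have ht : ∀ x ∈ t, 0 ≤ x := fun x hx => hs x (Multiset.mem_cons_of_mem hx)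
    obtain ⟨ih1, ih2⟩ := ih ht
    have heq : C c * ((r ::ₘ t).map (fun r => X + C r)).prod
        = (X + C r) * (C c * (t.map (fun r => X + C r)).prod) := by
      rw [Multiset.map_cons, Multiset.prod_cons]; ring
    rw [heq]
    exact mul_step hr ih1 ih2

/-- a real polynomial with nonnegative coefficients all of whose roots are
real has a log-concave coefficient sequence. -/
theorem realRooted_logConcave (f : Polynomial ℝ) (hf : f ≠ 0)
    (hnonneg : ∀ i, 0 ≤ f.coeff i)
    (hreal : (f.roots).card = f.natDegree) :
    ∀ i, 1 ≤ i → i ≤ f.natDegree - 1 →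
      f.coeff (i - 1) * f.coeff (i + 1) ≤ f.coeff i ^ 2 := by
  have hsplits : f.Splits := (splits_iff_card_roots).mpr hreal
  have hlc : 0 < f.leadingCoeff := by
    rcases lt_or_eq_of_le (hnonneg f.natDegree) with h | h
    · exact h
    · exact absurd (leadingCoeff_eq_zero.mp h.symm) hf
  -- all roots are nonpositive
  have hroots : ∀ t ∈ f.roots, t ≤ 0 := by
    intro t ht
    by_contra hpos
    push_neg at hpos
    have hev : f.eval t = 0 := (isRoot_of_mem_roots ht)
    have : 0 < f.eval t := by
      rw [eval_eq_sum_range]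
      apply Finset.sum_pos'
      · intro i _
        exact mul_nonneg (hnonneg i) (pow_nonneg hpos.le i)
      · refine ⟨f.natDegree, Finset.self_mem_range_succ _, ?_⟩
        exact mul_pos hlc (pow_pos hpos _)
    linarith
  have hfe : f = C f.leadingCoeff * (f.roots.map (fun a => X - C a)).prod :=
    hsplits.eq_prod_roots
  set s : Multiset ℝ := f.roots.map (fun t => -t) with hsdef
  have hs : ∀ r ∈ s, 0 ≤ r := by
    intro r hrm
    obtain ⟨t, htm, rfl⟩ := Multiset.mem_map.mp hrm
    linarith [hroots t htm]
  have hmaps : s.map (fun r => X + C r) = f.roots.map (fun a => X - C a) := by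
    rw [hsdef, Multiset.map_map]
    apply Multiset.map_congr rfl
    intro t _
    simp [sub_eq_add_neg]
  have hfe2 : f = C f.leadingCoeff * (s.map (fun r => X + C r)).prod := by
    rw [hmaps]; exact hfe
  have hSLC : SLC f := by
    rw [hfe2]; exact (key s hs f.leadingCoeff hlc.le).2
  intro i h1 _
  obtain ⟨i', rfl⟩ : ∃ i', i = i' + 1 := ⟨i - 1, by omega⟩
  have := hSLC i' i' le_rfl
  have e : i' + 1 - 1 = i' := by omega
  rw [e]
  calc f.coeff i' * f.coeff (i'+1+1) ≤ f.coeff (i'+1) * f.coeff (i'+1) := this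
    _ = f.coeff (i'+1) ^ 2 := (sq _).symm
end

section
/- A finite poset P is narrow (its elements can be partitioned into two chains) if and only if P contains no antichain with 3 elements. -/
open Finset

section Aux

variable {α : Type*} [PartialOrder α] [DecidableEq α]

/-- No 3-antichain, as a pointwise statement. -/
private lemma no3 (H : ¬ ∃ s : Finset α, s.card = 3 ∧ IsAntichain (· ≤ ·) (s : Set α))
    {x y z : α} (hxy : x ≠ y) (hxz : x ≠ z) (hyz : y ≠ z)
    (h1 : ¬ x ≤ y) (h2 : ¬ y ≤ x) (h3 : ¬ x ≤ z) (h4 : ¬ z ≤ x)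
    (h5 : ¬ y ≤ z) (h6 : ¬ z ≤ y) : False := by
  apply H
  refine ⟨{x, y, z}, ?_, ?_⟩
  · rw [Finset.card_eq_three]; exact ⟨x, y, z, hxy, hxz, hyz, rfl⟩
  · intro u hu v hv huv
    simp only [Finset.coe_insert, Finset.coe_singleton, Set.mem_insert_iff,
      Set.mem_singleton_iff] at hu hv
    rcases hu with rfl | rfl | rfl <;> rcases hv with rfl | rfl | rfl <;>
      first | exact absurd rfl huv | assumption

/-- Build the two chains covering `s` once we know a top element `a₁ ≤ a` of one chain
dominating all cross-incomparable elements. -/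
private lemma build {C₁ C₂ s : Finset α} {a a₁ : α}
    (hC₁ : IsChain (· ≤ ·) (C₁ : Set α)) (hC₂ : IsChain (· ≤ ·) (C₂ : Set α))
    (hunion : C₁ ∪ C₂ = s.erase a) (ha : a ∈ s)
    (ha₁a : a₁ ≤ a)
    (hdom : ∀ u ∈ C₁, ∀ v ∈ C₂, ¬ u ≤ v → ¬ v ≤ u → u ≤ a₁) :
    ∃ D₁ D₂ : Finset α, IsChain (· ≤ ·) (D₁ : Set α) ∧ IsChain (· ≤ ·) (D₂ : Set α) ∧
      D₁ ∪ D₂ = s := by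
  classical
  set K : Finset α := insert a (C₁.filter (· ≤ a₁)) with hK
  refine ⟨K, s \ K, ?_, ?_, ?_⟩
  · -- K is a chain
    intro u hu v hv huv
    simp only [hK, Finset.coe_insert, Set.mem_insert_iff, Finset.mem_coe,
      Finset.mem_filter] at hu hv
    rcases hu with rfl | ⟨huC, hule⟩
    · rcases hv with rfl | ⟨hvC, hvle⟩
      · exact absurd rfl huv
      · exact Or.inr (le_trans hvle ha₁a)
    · rcases hv with rfl | ⟨hvC, hvle⟩
      · exact Or.inl (le_trans hule ha₁a)
      · exact hC₁ huC hvC huv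
  · -- s \ K is a chain
    intro u hu v hv huv
    simp only [Finset.coe_sdiff, Set.mem_diff, Finset.mem_coe] at hu hv
    obtain ⟨hus, huK⟩ := hu
    obtain ⟨hvs, hvK⟩ := hv
    have hua : u ≠ a := fun h => huK (by simp [hK, h])
    have hva : v ≠ a := fun h => hvK (by simp [hK, h])
    have hus' : u ∈ C₁ ∪ C₂ := by rw [hunion]; exact Finset.mem_erase.mpr ⟨hua, hus⟩
    have hvs' : v ∈ C₁ ∪ C₂ := by rw [hunion]; exact Finset.mem_erase.mpr ⟨hva, hvs⟩
    by_contra hcomp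
    push_neg at hcomp
    obtain ⟨h1, h2⟩ := hcomp
    rcases Finset.mem_union.mp hus' with huC₁ | huC₂ <;>
      rcases Finset.mem_union.mp hvs' with hvC₁ | hvC₂
    · exact absurd (hC₁ huC₁ hvC₁ huv) (by simp [h1, h2])
    · exact huK (by simp [hK, Finset.mem_filter, huC₁, hdom u huC₁ v hvC₂ h1 h2])
    · exact hvK (by simp [hK, Finset.mem_filter, hvC₁, hdom v hvC₁ u huC₂ h2 h1])
    · exact absurd (hC₂ huC₂ hvC₂ huv) (by simp [h1, h2])
  · -- union
    have hKs : K ⊆ s := by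
      intro x hx
      simp only [hK, Finset.mem_insert, Finset.mem_filter] at hx
      rcases hx with rfl | ⟨hxC, _⟩
      · exact ha
      · have : x ∈ C₁ ∪ C₂ := Finset.mem_union_left _ hxC
        rw [hunion] at this
        exact Finset.mem_of_mem_erase this
    rw [Finset.union_comm, Finset.sdiff_union_of_subset hKs]

private lemma key_s8 (H : ¬ ∃ s : Finset α, s.card = 3 ∧ IsAntichain (· ≤ ·) (s : Set α)) :
    ∀ n (s : Finset α), s.card = n →
      ∃ C₁ C₂ : Finset α, IsChain (· ≤ ·) (C₁ : Set α) ∧ IsChain (· ≤ ·) (C₂ : Set α) ∧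
        C₁ ∪ C₂ = s := by
  intro n
  induction n using Nat.strong_induction_on with
  | _ n ih =>
    intro s hcard
    rcases s.eq_empty_or_nonempty with rfl | hne
    · exact ⟨∅, ∅, by simp [IsChain], by simp [IsChain], by simp⟩
    obtain ⟨a, ha, hamax⟩ := s.exists_maximal hne
    have hcard' : (s.erase a).card < n := by
      rw [← hcard]; exact Finset.card_erase_lt_of_mem ha
    obtain ⟨C₁, C₂, hC₁, hC₂, hunion⟩ := ih (s.erase a).card hcard' (s.erase a) rfl
    classical
    set T₁ : Finset α := C₁.filter (fun x => ∃ y ∈ C₂, ¬ x ≤ y ∧ ¬ y ≤ x) with hT₁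
    by_cases hT : T₁.Nonempty
    · obtain ⟨a₁, ha₁T, ha₁max⟩ := T₁.exists_maximal hT
      have ha₁C₁ : a₁ ∈ C₁ := (Finset.mem_filter.mp ha₁T).1
      obtain ⟨b, hbC₂, hb1, hb2⟩ := (Finset.mem_filter.mp ha₁T).2
      have ha₁le : ∀ x ∈ T₁, x ≤ a₁ := by
        intro x hx
        have hxC₁ : x ∈ C₁ := (Finset.mem_filter.mp hx).1
        rcases eq_or_ne x a₁ with rfl | hne'
        · exact le_refl x
        · rcases hC₁ hxC₁ ha₁C₁ hne' with h | h
          · exact h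
          · exact absurd (lt_of_le_of_ne h (Ne.symm hne')) (fun hlt => lt_irrefl _ (lt_of_lt_of_le hlt (ha₁max hx h)))
      set T₂ : Finset α := C₂.filter (fun y => ∃ x ∈ C₁, ¬ x ≤ y ∧ ¬ y ≤ x) with hT₂
      have hbT₂ : b ∈ T₂ := Finset.mem_filter.mpr ⟨hbC₂, a₁, ha₁C₁, hb1, hb2⟩
      obtain ⟨a₂, ha₂T, ha₂max⟩ := T₂.exists_maximal ⟨b, hbT₂⟩
      have ha₂C₂ : a₂ ∈ C₂ := (Finset.mem_filter.mp ha₂T).1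
      obtain ⟨c, hcC₁, hc1, hc2⟩ := (Finset.mem_filter.mp ha₂T).2
      have ha₂le : ∀ y ∈ T₂, y ≤ a₂ := by
        intro y hy
        have hyC₂ : y ∈ C₂ := (Finset.mem_filter.mp hy).1
        rcases eq_or_ne y a₂ with rfl | hne'
        · exact le_refl y
        · rcases hC₂ hyC₂ ha₂C₂ hne' with h | h
          · exact h
          · exact absurd (lt_of_le_of_ne h (Ne.symm hne')) (fun hlt => lt_irrefl _ (lt_of_lt_of_le hlt (ha₂max hy h)))
      have hcT₁ : c ∈ T₁ := Finset.mem_filter.mpr ⟨hcC₁, a₂, ha₂C₂, hc1, hc2⟩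
      -- a₁ and a₂ are incomparable
      have h12 : ¬ a₁ ≤ a₂ := fun h => hc1 (le_trans (ha₁le c hcT₁) h)
      have h21 : ¬ a₂ ≤ a₁ := fun h => hb2 (le_trans (ha₂le b hbT₂) h)
      have h12ne : a₁ ≠ a₂ := fun h => h12 (le_of_eq h)
      -- a₁, a₂ are in s.erase a, hence in s and distinct from a
      have ha₁s : a₁ ∈ s.erase a := by
        rw [← hunion]; exact Finset.mem_union_left _ ha₁C₁
      have ha₂s : a₂ ∈ s.erase a := by
        rw [← hunion]; exact Finset.mem_union_right _ ha₂C₂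
      have ha₁ne : a₁ ≠ a := (Finset.mem_erase.mp ha₁s).1
      have ha₂ne : a₂ ≠ a := (Finset.mem_erase.mp ha₂s).1
      -- a is comparable with a₁ or a₂; by maximality aᵢ ≤ a
      have hcases : a₁ ≤ a ∨ a₂ ≤ a := by
        by_contra hcon
        push_neg at hcon
        obtain ⟨hn1, hn2⟩ := hcon
        have haa₁ : ¬ a ≤ a₁ := fun h =>
          lt_irrefl _ (lt_of_lt_of_le (lt_of_le_of_ne h (Ne.symm ha₁ne))
            (hamax (Finset.mem_of_mem_erase ha₁s) h))
        have haa₂ : ¬ a ≤ a₂ := fun h =>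
          lt_irrefl _ (lt_of_lt_of_le (lt_of_le_of_ne h (Ne.symm ha₂ne))
            (hamax (Finset.mem_of_mem_erase ha₂s) h))
        exact no3 H (Ne.symm ha₁ne) (Ne.symm ha₂ne) h12ne
          haa₁ hn1 haa₂ hn2 h12 h21
      rcases hcases with h | h
      · exact build hC₁ hC₂ hunion ha h
          (fun u hu v hv h1 h2 =>
            ha₁le u (Finset.mem_filter.mpr ⟨hu, v, hv, h1, h2⟩))
      · exact build hC₂ hC₁ (by rw [Finset.union_comm]; exact hunion) ha h
          (fun u hu v hv h1 h2 =>
            ha₂le u (Finset.mem_filter.mpr ⟨hu, v, hv, h2, h1⟩))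
    · -- no cross-incomparable pair: s.erase a is a chain
      have hcross : ∀ x ∈ C₁, ∀ y ∈ C₂, x ≤ y ∨ y ≤ x := by
        intro x hx y hy
        by_contra hcon
        push_neg at hcon
        exact hT ⟨x, Finset.mem_filter.mpr ⟨hx, y, hy, hcon.1, hcon.2⟩⟩
      refine ⟨s.erase a, {a}, ?_, ?_, ?_⟩
      · intro u hu v hv huv
        have hu' : u ∈ C₁ ∪ C₂ := by rwa [hunion]
        have hv' : v ∈ C₁ ∪ C₂ := by rwa [hunion]
        rcases Finset.mem_union.mp hu' with h1 | h1 <;>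
          rcases Finset.mem_union.mp hv' with h2 | h2
        · exact hC₁ h1 h2 huv
        · exact hcross u h1 v h2
        · exact (hcross v h2 u h1).symm
        · exact hC₂ h1 h2 huv
      · simp [IsChain, Set.Pairwise]
      · rw [Finset.union_comm]
        exact Finset.insert_erase ha

end Aux

/-- a finite poset is narrow (a union of two chains) iff it has no
antichain with 3 elements (Dilworth's theorem for width ≤ 2). -/
theorem narrow_iff_no_three_antichain (α : Type*) [Fintype α] [PartialOrder α] :
    (∃ C₁ C₂ : Set α, IsChain (· ≤ ·) C₁ ∧ IsChain (· ≤ ·) C₂ ∧ C₁ ∪ C₂ = Set.univ) ↔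
      ¬ ∃ s : Finset α, s.card = 3 ∧ IsAntichain (· ≤ ·) (s : Set α) := by
  classical
  constructor
  · rintro ⟨C₁, C₂, hC₁, hC₂, hcover⟩ ⟨s, hs3, hanti⟩
    obtain ⟨x, y, z, hxy, hxz, hyz, rfl⟩ := Finset.card_eq_three.mp hs3
    have hx : (x : α) ∈ ({x, y, z} : Finset α) := by simp
    have hy : (y : α) ∈ ({x, y, z} : Finset α) := by simp
    have hz : (z : α) ∈ ({x, y, z} : Finset α) := by simp
    have incomp : ∀ u v : α, u ∈ ({x, y, z} : Finset α) → v ∈ ({x, y, z} : Finset α) →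
        u ≠ v → ¬ u ≤ v := fun u v hu hv huv =>
      hanti (by exact_mod_cast hu) (by exact_mod_cast hv) huv
    have mem2 : ∀ u : α, u ∈ C₁ ∨ u ∈ C₂ := fun u => by
      have : u ∈ C₁ ∪ C₂ := by rw [hcover]; trivial
      exact this
    -- pigeonhole: two of x, y, z in the same chain
    have pair : ∀ u v : α, u ≠ v → u ∈ ({x, y, z} : Finset α) → v ∈ ({x, y, z} : Finset α) →
        (u ∈ C₁ ∧ v ∈ C₁) ∨ (u ∈ C₂ ∧ v ∈ C₂) → False := by
      rintro u v huv hu hv (⟨h1, h2⟩ | ⟨h1, h2⟩)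
      · rcases hC₁ h1 h2 huv with h | h
        · exact incomp u v hu hv huv h
        · exact incomp v u hv hu (Ne.symm huv) h
      · rcases hC₂ h1 h2 huv with h | h
        · exact incomp u v hu hv huv h
        · exact incomp v u hv hu (Ne.symm huv) h
    rcases mem2 x with hx1 | hx1 <;> rcases mem2 y with hy1 | hy1 <;>
      rcases mem2 z with hz1 | hz1
    · exact pair x y hxy hx hy (Or.inl ⟨hx1, hy1⟩)
    · exact pair x y hxy hx hy (Or.inl ⟨hx1, hy1⟩)
    · exact pair x z hxz hx hz (Or.inl ⟨hx1, hz1⟩)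
    · exact pair y z hyz hy hz (Or.inr ⟨hy1, hz1⟩)
    · exact pair y z hyz hy hz (Or.inl ⟨hy1, hz1⟩)
    · exact pair x z hxz hx hz (Or.inr ⟨hx1, hz1⟩)
    · exact pair x y hxy hx hy (Or.inr ⟨hx1, hy1⟩)
    · exact pair x y hxy hx hy (Or.inr ⟨hx1, hy1⟩)
  · intro H
    obtain ⟨C₁, C₂, h1, h2, h3⟩ := key_s8 H (Finset.univ.card) Finset.univ rfl
    refine ⟨(C₁ : Set α), (C₂ : Set α), h1, h2, ?_⟩
    rw [← Finset.coe_union, h3, Finset.coe_univ]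
end

section
/- Let f be a real polynomial of degree m with squarefree content, i.e., gcd(f, f') = 1, and let (f_0, f_1, f_2, ...) be its Sturm sequence defined by f_0 = f, f_1 = f', and f_{i+1} = −rem(f_{i−1}, f_i). For real numbers a < b with f(a) ≠ 0 and f(b) ≠ 0, the number of real roots of f in the interval (a, b] equals V(a) − V(b), where V(c) is the number of sign changes (ignoring zeros) in the sequence f_0(c), f_1(c), f_2(c), .... -/
open Polynomial

noncomputable def sturmSeq (f : Polynomial ℝ) : ℕ → Polynomial ℝ
  | 0 => f
  | 1 => derivative f
  | (n + 2) => -(sturmSeq f n % sturmSeq f (n + 1))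

noncomputable def signChanges (l : List ℝ) : ℕ :=
  letI := Classical.decPred fun x : ℝ => x ≠ 0
  let l' := l.filter fun x : ℝ => decide (x ≠ 0)
  ((l'.zip l'.tail).filter fun q => decide (q.1 * q.2 < 0)).length

noncomputable def sturmVar (f : Polynomial ℝ) (c : ℝ) : ℕ :=
  signChanges ((List.range (f.natDegree + 1)).map fun i => (sturmSeq f i).eval c)
open Polynomial
namespace Sturm
noncomputable local instance : DecidablePred fun x : ℝ => x ≠ 0 := Classical.decPred _
noncomputable def changes (l : List ℝ) : ℕ :=
  ((l.zip l.tail).filter fun q => decide (q.1 * q.2 < 0)).length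
noncomputable def nzfilter (l : List ℝ) : List ℝ := l.filter fun x : ℝ => decide (x ≠ 0)
lemma signChanges_eq (l : List ℝ) : signChanges l = changes (nzfilter l) := rfl
@[simp] lemma changes_single (a : ℝ) : changes [a] = 0 := rfl
lemma changes_cons_cons (a b : ℝ) (t : List ℝ) :
    changes (a :: b :: t) = (if a * b < 0 then 1 else 0) + changes (b :: t) := by
  simp only [changes, List.zip_cons_cons, List.tail_cons, List.filter_cons]
  by_cases h : a * b < 0 <;> simp [h, Nat.add_comm]
lemma nzfilter_cons_of_ne (a : ℝ) (ha : a ≠ 0) (l : List ℝ) :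
    nzfilter (a :: l) = a :: nzfilter l := by simp [nzfilter, ha]
lemma nzfilter_cons_zero (l : List ℝ) : nzfilter ((0:ℝ) :: l) = nzfilter l := by
  simp [nzfilter]

inductive Ch : List (ℝ × ℝ) → Prop
  | single {a b : ℝ} (ha : a ≠ 0) (hb : 0 < a * b) : Ch [(a, b)]
  | lastzero {a b : ℝ} (ha : a ≠ 0) (hb : 0 < a * b) : Ch [(a, b), (0, 0)]
  | cons {a b : ℝ} (ha : a ≠ 0) (hb : 0 < a * b) {c c' : ℝ} {l : List (ℝ × ℝ)}
      (hc : c ≠ 0) (h : Ch ((c, c') :: l)) : Ch ((a, b) :: (c, c') :: l)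
  | zcons {a b b' c c' : ℝ} (ha : a ≠ 0) (hb : 0 < a * b) (hb' : b' ≠ 0)
      (hc : c ≠ 0) (hac : a * c < 0) {l : List (ℝ × ℝ)}
      (h : Ch ((c, c') :: l)) : Ch ((a, b) :: (0, b') :: (c, c') :: l)
  | zzcons {a b c c' : ℝ} (ha : a ≠ 0) (hb : 0 < a * b)
      (hc : c ≠ 0) (hac : a * c < 0) {l : List (ℝ × ℝ)}
      (h : Ch ((c, c') :: l)) : Ch ((a, b) :: (0, 0) :: (c, c') :: l)

lemma sign_transfer_neg {A B C : ℝ} (h1 : A * B < 0) (h2 : 0 < B * C) : A * C < 0 := by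
  nlinarith [mul_neg_of_neg_of_pos h1 h2, mul_self_nonneg B]

lemma sign_transfer_pos {A B C : ℝ} (h1 : 0 < A * B) (h2 : 0 < B * C) : 0 < A * C := by
  nlinarith [mul_pos h1 h2, mul_self_nonneg B]

lemma ite_sign {a b x y : ℝ} (hab : 0 < a * b) (hxy : 0 < x * y) :
    (a * x < 0 ↔ b * y < 0) := by
  constructor <;> intro h <;> nlinarith [mul_pos hab hxy]

lemma two_ite {b b' y : ℝ} (hby : b * y < 0) (hb' : b' ≠ 0) :
    ((if b * b' < 0 then 1 else 0) + (if b' * y < 0 then 1 else 0) : ℕ) = 1 := by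
  have hbb : 0 < b' * b' := mul_self_pos.mpr hb'
  by_cases h1 : b * b' < 0 <;> by_cases h2 : b' * y < 0 <;> simp only [h1, h2] <;> simp
  · nlinarith [mul_pos_of_neg_of_neg h1 h2]
  · nlinarith [mul_nonneg (not_lt.1 h1) (not_lt.1 h2)]

lemma ch_main {l : List (ℝ × ℝ)} (h : Ch l) :
    ∃ (x y : ℝ) (tx ty : List ℝ),
      nzfilter (l.map Prod.fst) = x :: tx ∧ nzfilter (l.map Prod.snd) = y :: ty ∧
      0 < x * y ∧ changes (x :: tx) = changes (y :: ty) := by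
  induction h with
  | @single a b ha hb =>
    have hb0 : b ≠ 0 := fun h => by simp [h] at hb
    exact ⟨a, b, [], [], by simp [nzfilter, ha], by simp [nzfilter, hb0], hb, rfl⟩
  | @lastzero a b ha hb =>
    have hb0 : b ≠ 0 := fun h => by simp [h] at hb
    exact ⟨a, b, [], [], by simp [nzfilter, ha], by simp [nzfilter, hb0], hb, rfl⟩
  | @cons a b ha hb c c' l hc h ih =>
    obtain ⟨x, y, tx, ty, hfx, hfy, hxy, hch⟩ := ih
    have hb0 : b ≠ 0 := fun h => by simp [h] at hb
    refine ⟨a, b, x :: tx, y :: ty, ?_, ?_, hb, ?_⟩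
    · rw [List.map_cons, nzfilter_cons_of_ne _ ha, hfx]
    · rw [List.map_cons, nzfilter_cons_of_ne _ hb0, hfy]
    · rw [changes_cons_cons, changes_cons_cons, hch, if_congr (ite_sign hb hxy) rfl rfl]
  | @zcons a b b' c c' ha hb hb' hc hac l h ih =>
    obtain ⟨x, y, tx, ty, hfx, hfy, hxy, hch⟩ := ih
    have hb0 : b ≠ 0 := fun h => by simp [h] at hb
    rw [List.map_cons, nzfilter_cons_of_ne _ hc] at hfx
    obtain ⟨rfl, rfl⟩ := List.cons_eq_cons.mp hfx
    have hby : b * y < 0 := by nlinarith [mul_pos hb hxy]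
    refine ⟨a, b, c :: nzfilter (List.map Prod.fst l), b' :: y :: ty, ?_, ?_, hb, ?_⟩
    · simp only [List.map_cons]
      rw [nzfilter_cons_of_ne _ ha, nzfilter_cons_zero, nzfilter_cons_of_ne _ hc]
    · simp only [List.map_cons]
      rw [List.map_cons] at hfy
      rw [nzfilter_cons_of_ne _ hb0, nzfilter_cons_of_ne _ hb', hfy]
    · rw [changes_cons_cons, changes_cons_cons, changes_cons_cons, hch,
        if_pos hac, ← Nat.add_assoc, two_ite hby hb']
  | @zzcons a b c c' ha hb hc hac l h ih =>
    obtain ⟨x, y, tx, ty, hfx, hfy, hxy, hch⟩ := ih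
    have hb0 : b ≠ 0 := fun h => by simp [h] at hb
    rw [List.map_cons, nzfilter_cons_of_ne _ hc] at hfx
    obtain ⟨rfl, rfl⟩ := List.cons_eq_cons.mp hfx
    have hby : b * y < 0 := by nlinarith [mul_pos hb hxy]
    refine ⟨a, b, c :: nzfilter (List.map Prod.fst l), y :: ty, ?_, ?_, hb, ?_⟩
    · simp only [List.map_cons]
      rw [nzfilter_cons_of_ne _ ha, nzfilter_cons_zero, nzfilter_cons_of_ne _ hc]
    · simp only [List.map_cons]
      rw [List.map_cons] at hfy
      rw [nzfilter_cons_of_ne _ hb0, nzfilter_cons_zero, hfy]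
    · rw [changes_cons_cons, changes_cons_cons, hch, if_pos hac, if_pos hby]
end Sturm

namespace Sturm
open Polynomial

variable (f : Polynomial ℝ)

local notation "g" => sturmSeq f

lemma g_zero : g 0 = f := rfl
lemma g_one : g 1 = derivative f := rfl
lemma g_rec (n : ℕ) : g (n + 2) = -(g n % g (n + 1)) := rfl

/-- three-term identity -/
lemma three_term (n : ℕ) : g n = g (n + 1) * (g n / g (n + 1)) - g (n + 2) := by
  rw [g_rec, sub_neg_eq_add, EuclideanDomain.div_add_mod (g n) (g (n + 1))]

lemma eval_three_term {n : ℕ} {x : ℝ} (h : (g (n + 1)).eval x = 0) :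
    (g n).eval x = -(g (n + 2)).eval x := by
  conv_lhs => rw [three_term f n]
  simp [h]

lemma coprime_chain (hsf : IsCoprime f (derivative f)) (n : ℕ) :
    IsCoprime (g n) (g (n + 1)) := by
  induction n with
  | zero => exact hsf
  | succ n ih =>
    rw [g_rec]
    refine (IsCoprime.neg_right ?_)
    rw [EuclideanDomain.mod_eq_sub_mul_div, sub_eq_add_neg, ← mul_neg]
    exact (ih.symm).add_mul_left_right _

lemma no_common_zero (hsf : IsCoprime f (derivative f)) (n : ℕ) (x : ℝ)
    (h1 : (g n).eval x = 0) (h2 : (g (n + 1)).eval x = 0) : False := by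
  obtain ⟨u, v, huv⟩ := coprime_chain f hsf n
  have := congrArg (Polynomial.eval x) huv
  simp [h1, h2] at this


lemma f_ne_zero (hm0 : f.natDegree ≠ 0) : f ≠ 0 := fun h => hm0 (by simp [h])

lemma deriv_ne_zero (hm0 : f.natDegree ≠ 0) (hsf : IsCoprime f (derivative f)) :
    derivative f ≠ 0 := by
  intro h
  rw [h] at hsf
  exact hm0 (natDegree_eq_zero_of_isUnit (isCoprime_zero_right.mp hsf))

lemma descent (hm0 : f.natDegree ≠ 0) : ∀ (d : ℕ) (i : ℕ), (g (i + 1)) ≠ 0 →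
    natDegree (g (i + 1)) ≤ d → ∃ n, g n = 0 := by
  intro d
  induction d using Nat.strong_induction_on with
  | _ d ih =>
    intro i h1 hd
    by_cases h2 : g (i + 2) = 0
    · exact ⟨i + 2, h2⟩
    · have hlt : degree (g (i + 2)) < degree (g (i + 1)) := by
        rw [g_rec, degree_neg]
        exact EuclideanDomain.mod_lt _ h1
      have hnd : natDegree (g (i + 2)) < natDegree (g (i + 1)) :=
        natDegree_lt_natDegree h2 hlt
      exact ih (natDegree (g (i + 2))) (lt_of_lt_of_le hnd hd) (i + 1) h2 le_rfl

lemma exists_zero (hm0 : f.natDegree ≠ 0) (hsf : IsCoprime f (derivative f)) :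
    ∃ n, g n = 0 :=
  descent f hm0 (natDegree (g 1)) 0 (deriv_ne_zero f hm0 hsf) le_rfl

lemma pairs_cons {α : Type*} (m k : ℕ) (hk : k ≤ m) (F : ℕ → α) :
    (List.range' k (m + 1 - k)).map F
      = F k :: (List.range' (k + 1) (m + 1 - (k + 1))).map F := by
  rw [show m + 1 - k = (m - k) + 1 by omega, List.range'_succ]
  rw [show m - k = m + 1 - (k + 1) by omega, List.map_cons]

section WithN

variable (hm0 : f.natDegree ≠ 0) (hsf : IsCoprime f (derivative f))
variable (N : ℕ) (hN0 : sturmSeq f N = 0) (hNlt : ∀ i, i < N → sturmSeq f i ≠ 0)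

include hm0 hsf hN0 hNlt

lemma N_ge_two : 2 ≤ N := by
  rcases Nat.lt_or_ge N 2 with h | h
  · interval_cases N
    · exact absurd hN0 (f_ne_zero f hm0)
    · exact absurd hN0 (deriv_ne_zero f hm0 hsf)
  · exact h

lemma deg_bound : ∀ i, 1 ≤ i → i < N → natDegree (g i) + i ≤ f.natDegree := by
  intro i
  induction i using Nat.strong_induction_on with
  | _ i ih =>
    intro h1 hiN
    rcases i with _ | i
    · omega
    rcases i with _ | j
    · have := natDegree_derivative_lt hm0
      rw [g_one]
      omega
    · show natDegree (g (j + 2)) + (j + 2) ≤ f.natDegree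
      have hj1 : g (j + 1) ≠ 0 := hNlt (j + 1) (by omega)
      have hj2 : g (j + 2) ≠ 0 := hNlt (j + 2) (by omega)
      have hlt : degree (g (j + 2)) < degree (g (j + 1)) := by
        rw [g_rec, degree_neg]
        exact EuclideanDomain.mod_lt _ hj1
      have hnd : natDegree (g (j + 2)) < natDegree (g (j + 1)) :=
        natDegree_lt_natDegree hj2 hlt
      have := ih (j + 1) (by omega) (by omega) (by omega)
      omega

lemma N_le (hm1 : 1 ≤ f.natDegree) : N ≤ f.natDegree + 1 := by
  by_contra h
  push_neg at h
  have := deg_bound f hm0 hsf N hN0 hNlt (f.natDegree + 1) (by omega) h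
  omega

/-- the last nonzero entry is a nonzero constant -/
lemma gcd_unit : ∃ c : ℝ, c ≠ 0 ∧ g (N - 1) = C c := by
  have h2 : 2 ≤ N := N_ge_two f hm0 hsf N hN0 hNlt
  have hcop : IsCoprime (g (N - 1)) (g N) := by
    have := coprime_chain f hsf (N - 1)
    rwa [Nat.sub_add_cancel (by omega)] at this
  rw [hN0] at hcop
  obtain ⟨r, hr, hCr⟩ := Polynomial.isUnit_iff.mp (isCoprime_zero_right.mp hcop)
  exact ⟨r, hr.ne_zero, hCr.symm⟩

lemma junk : ∀ j : ℕ, g (N + 2 * j) = 0 ∧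
    (g (N + 2 * j + 1) = g (N - 1) ∨ g (N + 2 * j + 1) = -g (N - 1)) := by
  have h2 : 2 ≤ N := N_ge_two f hm0 hsf N hN0 hNlt
  intro j
  induction j with
  | zero =>
    refine ⟨by simpa using hN0, Or.inr ?_⟩
    have hre : N + 2 * 0 + 1 = (N - 1) + 2 := by omega
    rw [hre, g_rec]
    have : N - 1 + 1 = N := by omega
    rw [this, hN0, EuclideanDomain.mod_zero]
  | succ j ihj =>
    obtain ⟨hz, ho⟩ := ihj
    have e1 : N + 2 * (j + 1) = (N + 2 * j) + 2 := by ring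
    have e2 : N + 2 * (j + 1) + 1 = (N + 2 * j + 1) + 2 := by ring
    constructor
    · rw [e1, g_rec, hz, EuclideanDomain.zero_mod, neg_zero]
    · rw [e2, g_rec]
      have hz2 : g (N + 2 * j + 1 + 1) = 0 := by
        have : N + 2 * j + 1 + 1 = N + 2 * (j + 1) := by ring
        rw [this, e1, g_rec, hz, EuclideanDomain.zero_mod, neg_zero]
      rw [hz2, EuclideanDomain.mod_zero]
      rcases ho with h | h
      · exact Or.inr (by rw [h])
      · exact Or.inl (by rw [h, neg_neg])

lemma tail_const : ∀ i, N ≤ i → g i = 0 ∨ ∃ c : ℝ, c ≠ 0 ∧ g i = C c := by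
  intro i hi
  obtain ⟨c, hc, hgc⟩ := gcd_unit f hm0 hsf N hN0 hNlt
  rcases Nat.even_or_odd (i - N) with ⟨j, hj⟩ | ⟨j, hj⟩
  · left
    have : i = N + 2 * j := by omega
    rw [this]
    exact (junk f hm0 hsf N hN0 hNlt j).1
  · right
    have : i = N + 2 * j + 1 := by omega
    rw [this]
    rcases (junk f hm0 hsf N hN0 hNlt j).2 with h | h
    · exact ⟨c, hc, by rw [h, hgc]⟩
    · exact ⟨-c, neg_ne_zero.mpr hc, by rw [h, hgc, map_neg]⟩

lemma last_eval_zero (hm1 : 1 ≤ f.natDegree) (x : ℝ)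
    (hx : (g f.natDegree).eval x = 0) : g f.natDegree = 0 := by
  rcases Nat.lt_or_ge f.natDegree N with h | h
  · exfalso
    have hd := deg_bound f hm0 hsf N hN0 hNlt f.natDegree hm1 h
    have h0 : natDegree (g f.natDegree) = 0 := by omega
    obtain ⟨c, hc⟩ := Polynomial.natDegree_eq_zero.mp h0
    rw [← hc] at hx
    simp at hx
    refine hNlt _ h ?_
    rw [← hc, hx, map_zero]
  · rcases tail_const f hm0 hsf N hN0 hNlt _ h with h0 | ⟨c, hc, hgc⟩
    · exact h0
    · rw [hgc] at hx
      simp at hx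
      exact absurd hx hc

lemma build (hm1 : 1 ≤ f.natDegree) (x y : ℝ)
    (hsame : ∀ i, i ≤ f.natDegree → (sturmSeq f i).eval x ≠ 0 →
      0 < (sturmSeq f i).eval x * (sturmSeq f i).eval y)
    (hnz : ∀ i, i ≤ f.natDegree → sturmSeq f i ≠ 0 → (sturmSeq f i).eval y ≠ 0) :
    ∀ (d k : ℕ), k ≤ f.natDegree → f.natDegree - k ≤ d → (sturmSeq f k).eval x ≠ 0 →
      Ch ((List.range' k (f.natDegree + 1 - k)).map
        fun i => ((sturmSeq f i).eval x, (sturmSeq f i).eval y)) := by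
  set m := f.natDegree with hmdef
  set F : ℕ → ℝ × ℝ := fun i => ((sturmSeq f i).eval x, (sturmSeq f i).eval y) with hF
  intro d
  induction d using Nat.strong_induction_on with
  | _ d ih =>
    intro k hk hdk hkx
    by_cases hkm : k = m
    · rw [hkm] at hkx ⊢
      rw [pairs_cons m m le_rfl, show m + 1 - (m + 1) = 0 by omega, List.range'_zero,
        List.map_nil]
      exact Ch.single hkx (hsame m le_rfl hkx)
    · have hklt : k < m := lt_of_le_of_ne hk hkm
      rw [pairs_cons m k hk]
      by_cases h1 : (sturmSeq f (k + 1)).eval x = 0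
      · have hid : (sturmSeq f k).eval x = -(sturmSeq f (k + 2)).eval x :=
          eval_three_term f h1
        have h2x : (sturmSeq f (k + 2)).eval x ≠ 0 := by
          intro h; rw [hid, h, neg_zero] at hkx; exact hkx rfl
        have hac : (sturmSeq f k).eval x * (sturmSeq f (k + 2)).eval x < 0 := by
          rw [hid]
          nlinarith [mul_self_pos.mpr h2x]
        by_cases hk1m : k + 1 = m
        · have hgm : sturmSeq f (k + 1) = 0 := by
            rw [hk1m]
            exact last_eval_zero f hm0 hsf N hN0 hNlt hm1 x
              (show (sturmSeq f f.natDegree).eval x = 0 by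
                rw [show f.natDegree = k + 1 from hk1m.symm]; exact h1)
          rw [pairs_cons m (k + 1) (by omega), show m + 1 - (k + 1 + 1) = 0 by omega,
            List.range'_zero, List.map_nil]
          have : F (k + 1) = (0, 0) := by rw [hF]; simp [hgm]
          rw [this]
          exact Ch.lastzero hkx (hsame k hk hkx)
        · have hk2 : k + 2 ≤ m := by omega
          have hch2 : Ch ((List.range' (k + 2) (m + 1 - (k + 2))).map F) :=
            ih (m - (k + 2)) (by omega) (k + 2) hk2 le_rfl h2x
          rw [pairs_cons m (k + 1) (by omega), pairs_cons m (k + 2) hk2]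
          rw [pairs_cons m (k + 2) hk2] at hch2
          by_cases hz : sturmSeq f (k + 1) = 0
          · have : F (k + 1) = (0, 0) := by rw [hF]; simp [hz]
            rw [this]
            exact Ch.zzcons hkx (hsame k hk hkx) h2x hac hch2
          · have hb' : (sturmSeq f (k + 1)).eval y ≠ 0 := hnz (k + 1) (by omega) hz
            have : F (k + 1) = (0, (sturmSeq f (k + 1)).eval y) := by rw [hF]; simp [h1]
            rw [this]
            exact Ch.zcons hkx (hsame k hk hkx) hb' h2x hac hch2
      · have hch1 : Ch ((List.range' (k + 1) (m + 1 - (k + 1))).map F) :=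
          ih (m - (k + 1)) (by omega) (k + 1) (by omega) le_rfl h1
        rw [pairs_cons m (k + 1) (by omega)] at hch1 ⊢
        exact Ch.cons hkx (hsame k hk hkx) h1 hch1

variable (hm1 : 1 ≤ f.natDegree) (x y : ℝ)
  (hsame : ∀ i, i ≤ f.natDegree → (sturmSeq f i).eval x ≠ 0 →
    0 < (sturmSeq f i).eval x * (sturmSeq f i).eval y)
  (hnz : ∀ i, i ≤ f.natDegree → sturmSeq f i ≠ 0 → (sturmSeq f i).eval y ≠ 0)

include hm1 hsame hnz

lemma local_compare_ne (hfx : f.eval x ≠ 0) : sturmVar f y = sturmVar f x := by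
  have hch := build f hm0 hsf N hN0 hNlt hm1 x y hsame hnz f.natDegree 0 (by omega)
    (by omega) hfx
  obtain ⟨x0, y0, tx, ty, hfx0, hfy0, hxy0, hch0⟩ := ch_main hch
  have ex : sturmVar f x = changes (nzfilter (((List.range' 0 (f.natDegree + 1 - 0)).map
      (fun i => ((sturmSeq f i).eval x, (sturmSeq f i).eval y))).map Prod.fst)) := by
    rw [sturmVar, signChanges_eq, List.map_map, ← List.range_eq_range']
    rfl
  have ey : sturmVar f y = changes (nzfilter (((List.range' 0 (f.natDegree + 1 - 0)).map
      (fun i => ((sturmSeq f i).eval x, (sturmSeq f i).eval y))).map Prod.snd)) := by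
    rw [sturmVar, signChanges_eq, List.map_map, ← List.range_eq_range']
    rfl
  rw [ex, hfx0, ey, hfy0, hch0]

lemma local_compare_root (hfx : f.eval x = 0)
    (hslope : 0 < f.eval y * (derivative f).eval x * (y - x)) :
    sturmVar f y = sturmVar f x + (if y < x then 1 else 0) := by
  have h1x : (sturmSeq f 1).eval x ≠ 0 := fun h => no_common_zero f hsf 0 x hfx h
  have hch := build f hm0 hsf N hN0 hNlt hm1 x y hsame hnz f.natDegree 1 (by omega)
    (by omega) h1x
  obtain ⟨x1, y1, tx, ty, hfx1, hfy1, hxy1, hch1⟩ := ch_main hch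
  rw [pairs_cons f.natDegree 1 hm1] at hfx1
  rw [List.map_cons, nzfilter_cons_of_ne _ h1x] at hfx1
  obtain ⟨hx1, htx⟩ := List.cons_eq_cons.mp hfx1
  -- decompose the full lists
  have hsplit : List.range' 0 (f.natDegree + 1) = 0 :: List.range' 1 (f.natDegree + 1 - 1) := by
    rw [show f.natDegree + 1 - 1 = f.natDegree from rfl, List.range'_succ]
  have hfy' : f.eval y ≠ 0 := by intro h; rw [h] at hslope; nlinarith
  have ex : sturmVar f x = changes (x1 :: tx) := by
    rw [← hx1, ← htx]
    rw [sturmVar, signChanges_eq, List.range_eq_range', hsplit, List.map_cons]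
    rw [show (sturmSeq f 0).eval x = 0 from hfx, nzfilter_cons_zero]
    rw [pairs_cons f.natDegree 1 hm1 (fun i => (sturmSeq f i).eval x)]
    rw [nzfilter_cons_of_ne _ h1x]
    simp [List.map_map, Function.comp_def]
  have hy1 : nzfilter ((List.range' 1 (f.natDegree + 1 - 1)).map
      (fun i => (sturmSeq f i).eval y)) = y1 :: ty := by
    rw [← hfy1]
    simp [List.map_map, Function.comp_def]
  have ey : sturmVar f y = changes (f.eval y :: y1 :: ty) := by
    rw [sturmVar, signChanges_eq, List.range_eq_range', hsplit, List.map_cons]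
    rw [show (sturmSeq f 0).eval y = f.eval y from rfl, nzfilter_cons_of_ne _ hfy', hy1]
  have hd : (derivative f).eval x = x1 := hx1
  have hx1ne : x1 ≠ 0 := fun h => by rw [h] at hxy1; nlinarith
  rw [ey, changes_cons_cons, ← hch1, ← ex]
  by_cases hyx : y < x
  · have hAB : f.eval y * (derivative f).eval x < 0 := by
      by_contra hcon
      push_neg at hcon
      nlinarith [mul_nonneg hcon (show (0:ℝ) ≤ x - y by linarith)]
    rw [hd] at hAB
    have : f.eval y * y1 < 0 := sign_transfer_neg hAB hxy1
    rw [if_pos this, if_pos hyx, Nat.add_comm]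
  · have hyx' : x < y := by
      rcases lt_trichotomy y x with h | h | h
      · exact absurd h hyx
      · rw [h] at hslope; nlinarith
      · exact h
    have hAB : 0 < f.eval y * (derivative f).eval x := by
      by_contra hcon
      push_neg at hcon
      nlinarith [mul_nonneg (neg_nonneg.mpr hcon) (show (0:ℝ) ≤ y - x by linarith)]
    rw [hd] at hAB
    have : ¬ (f.eval y * y1 < 0) := not_lt.mpr (le_of_lt (sign_transfer_pos hAB hxy1))
    rw [if_neg this, if_neg hyx, Nat.add_comm]

end WithN

open Filter Topology Metric in
lemma eventual (f : Polynomial ℝ) (hm0 : f.natDegree ≠ 0) (hsf : IsCoprime f (derivative f))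
    (x : ℝ) :
    ∃ δ > (0:ℝ), (∀ z : ℝ, f.eval z = 0 → |z - x| < δ → z = x) ∧
      ∀ y : ℝ, y ≠ x → |y - x| < δ →
        ((∀ i, i ≤ f.natDegree → (sturmSeq f i).eval x ≠ 0 →
            0 < (sturmSeq f i).eval x * (sturmSeq f i).eval y) ∧
         (∀ i, i ≤ f.natDegree → sturmSeq f i ≠ 0 → (sturmSeq f i).eval y ≠ 0) ∧
         (f.eval x = 0 → 0 < f.eval y * (derivative f).eval x * (y - x))) := by
  classical
  -- sign preservation by continuity
  have E1 : ∀ᶠ y in 𝓝[≠] x, ∀ i ∈ Finset.range (f.natDegree + 1),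
      ((sturmSeq f i).eval x ≠ 0 → 0 < (sturmSeq f i).eval x * (sturmSeq f i).eval y) := by
    rw [Filter.eventually_all_finset]
    intro i _
    by_cases hix : (sturmSeq f i).eval x = 0
    · exact Filter.Eventually.of_forall fun y h => absurd hix h
    · have hc : Continuous fun y : ℝ => (sturmSeq f i).eval x * (sturmSeq f i).eval y :=
        continuous_const.mul (sturmSeq f i).continuous
      have hpos : 0 < (sturmSeq f i).eval x * (sturmSeq f i).eval x :=
        mul_self_pos.mpr hix
      have := (hc.tendsto x).eventually (lt_mem_nhds hpos)
      exact (this.filter_mono nhdsWithin_le_nhds).mono fun y hy _ => hy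
  -- slope condition
  have E3 : ∀ᶠ y in 𝓝[≠] x,
      (f.eval x = 0 → 0 < f.eval y * (derivative f).eval x * (y - x)) := by
    by_cases hfx : f.eval x = 0
    · have hd : (derivative f).eval x ≠ 0 := by
        intro h
        exact no_common_zero f hsf 0 x hfx h
      have ht : Tendsto (slope (fun y => f.eval y) x) (𝓝[≠] x) (𝓝 ((derivative f).eval x)) :=
        hasDerivAt_iff_tendsto_slope.mp (f.hasDerivAt x)
      have htd := ht.mul_const ((derivative f).eval x)
      have hpos : 0 < (derivative f).eval x * (derivative f).eval x := mul_self_pos.mpr hd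
      have hev := htd.eventually (lt_mem_nhds hpos)
      refine hev.mp (eventually_mem_nhdsWithin.mono ?_)
      intro y hy hslope _
      have hyx : y - x ≠ 0 := sub_ne_zero.mpr hy
      rw [slope_def_field, hfx, sub_zero] at hslope
      have h2 : 0 < (y - x)^2 := by positivity
      have h3 := mul_pos hslope h2
      have h4 : f.eval y / (y - x) * (derivative f).eval x * (y - x)^2
          = f.eval y * (derivative f).eval x * (y - x) := by
        field_simp
      rwa [h4] at h3
    · exact Filter.Eventually.of_forall fun y h => absurd h hfx
  obtain ⟨ε, hε, hsub⟩ := mem_nhdsWithin_iff.mp (E1.and E3)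
  -- root avoidance
  set T : Finset ℝ :=
    (Finset.range (f.natDegree + 1)).biUnion (fun i => (sturmSeq f i).roots.toFinset) with hT
  have hclosed : IsClosed (↑(T.erase x) : Set ℝ) := (T.erase x).finite_toSet.isClosed
  have hxnot : x ∈ (↑(T.erase x) : Set ℝ)ᶜ := by
    simp only [Set.mem_compl_iff, Finset.coe_sort_coe, Finset.mem_coe]
    exact fun h => (Finset.ne_of_mem_erase h) rfl
  obtain ⟨δ2, hδ2, hball⟩ :=
    Metric.mem_nhds_iff.mp (hclosed.isOpen_compl.mem_nhds hxnot)
  refine ⟨min ε δ2, lt_min hε hδ2, ?_, ?_⟩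
  · intro z hz hzx
    by_contra hzne
    have hzT : z ∈ T := by
      rw [hT]
      refine Finset.mem_biUnion.mpr ⟨0, Finset.mem_range.mpr (by omega), ?_⟩
      show z ∈ f.roots.toFinset
      rw [Multiset.mem_toFinset, Polynomial.mem_roots (f_ne_zero f hm0)]
      exact hz
    have : z ∈ (↑(T.erase x) : Set ℝ)ᶜ := by
      apply hball
      rw [Metric.mem_ball, Real.dist_eq]
      exact lt_of_lt_of_le hzx (min_le_right _ _)
    exact this (Finset.mem_coe.mpr (Finset.mem_erase.mpr ⟨hzne, hzT⟩))
  · intro y hy hyd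
    have hymem : y ∈ ball x ε ∩ {t : ℝ | t ≠ x} := by
      constructor
      · rw [Metric.mem_ball, Real.dist_eq]
        exact lt_of_lt_of_le hyd (min_le_left _ _)
      · exact hy
    obtain ⟨h1, h3⟩ := hsub hymem
    refine ⟨fun i hi => h1 i (Finset.mem_range.mpr (by omega)), ?_, h3⟩
    intro i hi hgi hzero
    have hyT : y ∈ T := by
      rw [hT]
      refine Finset.mem_biUnion.mpr ⟨i, Finset.mem_range.mpr (by omega), ?_⟩
      rw [Multiset.mem_toFinset, Polynomial.mem_roots hgi]
      exact hzero
    have : y ∈ (↑(T.erase x) : Set ℝ)ᶜ := by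
      apply hball
      rw [Metric.mem_ball, Real.dist_eq]
      exact lt_of_lt_of_le hyd (min_le_right _ _)
    exact this (Finset.mem_coe.mpr (Finset.mem_erase.mpr ⟨hy, hyT⟩))

end Sturm

open Sturm Filter Topology

/-- Sturm's theorem. If `gcd(f, f') = 1` then the number of real roots of
`f` in `(a, b]` is `V(a) - V(b)`. -/
theorem sturm_theorem (f : Polynomial ℝ) (m : ℕ) (hm : f.natDegree = m) (hm0 : 0 < m)
    (hsf : IsCoprime f (derivative f)) (a b : ℝ) (hab : a < b)
    (ha : f.eval a ≠ 0) (hb : f.eval b ≠ 0) :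
    ((f.roots.toFinset.filter fun x => a < x ∧ x ≤ b).card : ℤ) =
      (sturmVar f a : ℤ) - (sturmVar f b : ℤ) := by
  classical
  subst hm
  have hm0' : f.natDegree ≠ 0 := by omega
  have hex := exists_zero f hm0' hsf
  obtain ⟨N, hN0, hNlt⟩ : ∃ N, sturmSeq f N = 0 ∧ ∀ i, i < N → sturmSeq f i ≠ 0 :=
    ⟨Nat.find hex, Nat.find_spec hex, fun i h => Nat.find_min hex h⟩
  set R : ℝ → ℤ := fun c => ((f.roots.toFinset.filter fun z => c < z ∧ z ≤ b).card : ℤ)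
    with hR
  set Φ : (Set.Icc a b) → ℤ := fun p => (sturmVar f p.val : ℤ) - R p.val with hΦ
  have key : IsLocallyConstant Φ := by
    rw [IsLocallyConstant.iff_eventually_eq]
    intro p
    obtain ⟨δ, hδ, hroot, hy⟩ := eventual f hm0' hsf p.val
    have hΦloc : ∀ y : ℝ, |y - ↑p| < δ → y ∈ Set.Icc a b →
        (sturmVar f y : ℤ) - R y = (sturmVar f ↑p : ℤ) - R ↑p := by
      intro y hyδ hyIcc
      by_cases hyp : y = ↑p
      · rw [hyp]
      obtain ⟨hsame, hnz, hslope⟩ := hy y hyp hyδ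
      have hyδ' := abs_sub_lt_iff.mp hyδ
      have hRlem : ∀ z : ℝ, f.eval z = 0 → z ≠ ↑p →
          ((y < z ∧ z ≤ b) ↔ ((↑p : ℝ) < z ∧ z ≤ b)) := by
        intro z hz hzp
        have hfar : ¬ |z - ↑p| < δ := fun h => hzp (hroot z hz h)
        push_neg at hfar
        rcases abs_cases (z - (↑p : ℝ)) with ⟨he, _⟩ | ⟨he, _⟩ <;> rw [he] at hfar
        · constructor <;> rintro ⟨h1, h2⟩ <;> exact ⟨by linarith, h2⟩
        · constructor <;> rintro ⟨h1, h2⟩ <;> exact ⟨by linarith, h2⟩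
      by_cases hfp : f.eval ↑p = 0
      · have hV := local_compare_root f hm0' hsf N hN0 hNlt (by omega) (↑p) y
          hsame hnz hfp (hslope hfp)
        have hpmem : (↑p : ℝ) ∈ f.roots.toFinset := by
          rw [Multiset.mem_toFinset, Polynomial.mem_roots (f_ne_zero f hm0')]
          exact hfp
        by_cases hylt : y < ↑p
        · rw [if_pos hylt] at hV
          have hset : (f.roots.toFinset.filter fun z => y < z ∧ z ≤ b)
              = insert (↑p : ℝ) (f.roots.toFinset.filter fun z => (↑p:ℝ) < z ∧ z ≤ b) := by
            ext z
            simp only [Finset.mem_filter, Finset.mem_insert]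
            constructor
            · rintro ⟨hzr, hzc⟩
              by_cases hzp : z = ↑p
              · exact Or.inl hzp
              · exact Or.inr ⟨hzr, (hRlem z (by
                  rwa [Multiset.mem_toFinset, Polynomial.mem_roots (f_ne_zero f hm0')]
                    at hzr) hzp).mp hzc⟩
            · rintro (hzp | ⟨hzr, hzc⟩)
              · subst hzp
                exact ⟨hpmem, hylt, p.2.2⟩
              · refine ⟨hzr, ?_, hzc.2⟩
                linarith [hzc.1, hylt]
          have hcard : R y = R ↑p + 1 := by
            rw [hR]
            simp only
            rw [hset, Finset.card_insert_of_notMem (by simp)]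
            push_cast
            ring
          rw [hV, hcard]
          push_cast
          ring
        · rw [if_neg hylt] at hV
          have hset : (f.roots.toFinset.filter fun z => y < z ∧ z ≤ b)
              = (f.roots.toFinset.filter fun z => (↑p:ℝ) < z ∧ z ≤ b) := by
            ext z
            simp only [Finset.mem_filter]
            constructor
            · rintro ⟨hzr, hzc⟩
              by_cases hzp : z = ↑p
              · subst hzp
                exact absurd hzc.1 (by push_neg at hylt ⊢; exact hylt)
              · exact ⟨hzr, (hRlem z (by
                  rwa [Multiset.mem_toFinset, Polynomial.mem_roots (f_ne_zero f hm0')]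
                    at hzr) hzp).mp hzc⟩
            · rintro ⟨hzr, hzc⟩
              by_cases hzp : z = ↑p
              · exact absurd (hzp ▸ hzc.1) (lt_irrefl _)
              · exact ⟨hzr, (hRlem z (by
                  rwa [Multiset.mem_toFinset, Polynomial.mem_roots (f_ne_zero f hm0')]
                    at hzr) hzp).mpr hzc⟩
          have hcard : R y = R ↑p := by rw [hR]; simp only; rw [hset]
          rw [hV, hcard]
          push_cast
          ring
      · have hV := local_compare_ne f hm0' hsf N hN0 hNlt (by omega) (↑p) y
          hsame hnz hfp
        have hset : (f.roots.toFinset.filter fun z => y < z ∧ z ≤ b)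
            = (f.roots.toFinset.filter fun z => (↑p:ℝ) < z ∧ z ≤ b) := by
          ext z
          simp only [Finset.mem_filter]
          constructor <;> rintro ⟨hzr, hzc⟩ <;>
            have hzroot : f.eval z = 0 := by
              rwa [Multiset.mem_toFinset, Polynomial.mem_roots (f_ne_zero f hm0')] at hzr
          · have hzp : z ≠ ↑p := fun h => hfp (h ▸ hzroot)
            exact ⟨hzr, (hRlem z hzroot hzp).mp hzc⟩
          · have hzp : z ≠ ↑p := fun h => hfp (h ▸ hzroot)
            exact ⟨hzr, (hRlem z hzroot hzp).mpr hzc⟩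
        have hcard : R y = R ↑p := by rw [hR]; simp only; rw [hset]
        rw [hV, hcard]
    have hev : ∀ᶠ y in 𝓝 (p : ℝ), |y - (p : ℝ)| < δ := by
      filter_upwards [Metric.ball_mem_nhds (p : ℝ) hδ] with y hy
      rwa [Metric.mem_ball, Real.dist_eq] at hy
    rw [nhds_subtype]
    exact (hev.comap _).mono fun q hq => hΦloc _ hq q.2
  haveI : PreconnectedSpace (Set.Icc a b) :=
    Subtype.preconnectedSpace isPreconnected_Icc
  have hconst := key.apply_eq_of_preconnectedSpace
    (⟨a, le_refl a, le_of_lt hab⟩ : Set.Icc a b) (⟨b, le_of_lt hab, le_refl b⟩ : Set.Icc a b)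
  rw [hΦ] at hconst
  simp only at hconst
  have hRb : R b = 0 := by
    rw [hR]
    simp only
    rw [Finset.filter_false_of_mem (fun z _ h => absurd h.2 (not_le.mpr h.1))]
    · simp
  rw [hRb] at hconst
  have : R a = (sturmVar f a : ℤ) - (sturmVar f b : ℤ) := by linarith
  rw [hR] at this
  simpa using this
end

section
/- For any finite poset P on [p], the order polynomial Ω_P(t) (counting order-preserving maps P → [t]) agrees with a polynomial in t of degree p for all positive integers t, with leading coefficient e(P)/p!, where e(P) is the number of linear extensions of P. -/
/-- The order polynomial counting function: the number of order-preserving maps from the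
poset `(Fin p, r)` to the chain `[t]`. -/
noncomputable def orderPoly (p : ℕ) (r : Fin p → Fin p → Prop) (t : ℕ) : ℕ :=
  Nat.card {f : Fin p → Fin t // ∀ i j, r i j → f i ≤ f j}

/-- The number of linear extensions of the poset `(Fin p, r)`: order-preserving
bijections to the chain `[p]`. -/
noncomputable def linExt (p : ℕ) (r : Fin p → Fin p → Prop) : ℕ :=
  Nat.card {σ : Fin p ≃ Fin p // ∀ i j, r i j → σ i ≤ σ j}


open Finset

/-- StrictMono from adjacent strict increases, for `Fin`-indexed tuples. -/
lemma finStrictMonoOfAdj {p : ℕ} {α : Type*} [Preorder α] {f : Fin p → α}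
    (h : ∀ (k : ℕ) (hk : k + 1 < p), f ⟨k, by omega⟩ < f ⟨k + 1, hk⟩) : StrictMono f := by
  intro i j hij
  obtain ⟨i, hi⟩ := i
  obtain ⟨j, hj⟩ := j
  rw [Fin.lt_def] at hij
  simp only at hij
  induction j with
  | zero => omega
  | succ n ih =>
    rcases Nat.lt_or_ge i n with hin | hin
    · exact lt_trans (ih (by omega) (by omega)) (h n hj)
    · have : i = n := by omega
      subst this
      exact h i hj

lemma finMonotoneOfAdj {p : ℕ} {α : Type*} [Preorder α] {f : Fin p → α}
    (h : ∀ (k : ℕ) (hk : k + 1 < p), f ⟨k, by omega⟩ ≤ f ⟨k + 1, hk⟩) : Monotone f := by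
  intro i j hij
  obtain ⟨i, hi⟩ := i
  obtain ⟨j, hj⟩ := j
  rw [Fin.le_def] at hij
  simp only at hij
  induction j with
  | zero =>
    have : i = 0 := by omega
    subst this; exact le_refl _
  | succ n ih =>
    rcases Nat.lt_or_ge i (n+1) with hin | hin
    · rcases Nat.lt_or_ge i n with hin' | hin'
      · exact le_trans (ih (by omega) (by omega)) (h n hj)
      · have : i = n := by omega
        subst this
        exact h i hj
    · have : i = n + 1 := by omega
      subst this; exact le_refl _

/-- gap estimate for strictly monotone Fin → Fin maps -/
lemma finStrictMonoGap {p m : ℕ} {f : Fin p → Fin m} (hf : StrictMono f) :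
    ∀ i j : Fin p, (i : ℕ) ≤ j → (f i : ℕ) + ((j : ℕ) - i) ≤ f j := by
  intro i j hij
  obtain ⟨i, hi⟩ := i
  obtain ⟨j, hj⟩ := j
  simp only at hij ⊢
  induction j with
  | zero =>
    have : i = 0 := by omega
    subst this; simp
  | succ n ih =>
    rcases Nat.lt_or_ge i (n+1) with hin | hin
    · have h1 : (f ⟨n, by omega⟩ : ℕ) < f ⟨n+1, hj⟩ := hf (by simp [Fin.lt_def])
      have h2 := ih (by omega) (by omega)
      omega
    · have : i = n + 1 := by omega
      subst this; simp

/-- The number of strictly monotone maps `Fin k → Fin m` is `m.choose k`. -/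
lemma cardStrictMonoFin (k m : ℕ) :
    Nat.card {h : Fin k → Fin m // StrictMono h} = m.choose k := by
  classical
  have e : {h : Fin k → Fin m // StrictMono h} ≃ {s : Finset (Fin m) // s.card = k} :=
    { toFun := fun h => ⟨Finset.univ.image h.1, by
        rw [Finset.card_image_of_injective _ h.2.injective, Finset.card_univ, Fintype.card_fin]⟩
      invFun := fun s => ⟨s.1.orderEmbOfFin s.2, (s.1.orderEmbOfFin s.2).strictMono⟩
      left_inv := fun h => Subtype.ext <|
        (Finset.orderEmbOfFin_unique _ (fun i => Finset.mem_image_of_mem _ (Finset.mem_univ i))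
          h.2).symm
      right_inv := fun s => Subtype.ext <| by
        apply Finset.eq_of_subset_of_card_le
        · intro x hx
          simp only [Finset.mem_image, Finset.mem_univ, true_and] at hx
          obtain ⟨i, rfl⟩ := hx
          exact Finset.orderEmbOfFin_mem _ _ _
        · rw [Finset.card_image_of_injective _ (s.1.orderEmbOfFin s.2).injective,
            Finset.card_univ, Fintype.card_fin, s.2] }
  rw [Nat.card_congr e, Nat.card_eq_fintype_card, Fintype.card_finset_len, Fintype.card_fin]


open Finset

def ChainCond (p t : ℕ) (S : Finset ℕ) (g : Fin p → Fin t) : Prop :=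
  ∀ (k : ℕ) (hk : k + 1 < p),
    g ⟨k, by omega⟩ ≤ g ⟨k + 1, hk⟩ ∧ (k ∈ S → g ⟨k, by omega⟩ < g ⟨k + 1, hk⟩)

lemma prodRangeAdd (n : ℕ) : ∀ k : ℕ, ∏ i ∈ Finset.range k, (n + i) = n.ascFactorial k := by
  intro k
  induction k with
  | zero => simp
  | succ m ih => rw [Finset.prod_range_succ, ih, Nat.ascFactorial_succ, mul_comm]

section chain
variable {p t : ℕ} {S : Finset ℕ}

lemma chainCount (p t : ℕ) (S : Finset ℕ) (hS : S ⊆ Finset.range (p - 1)) :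
    Nat.card {g : Fin p → Fin t // ChainCond p t S g}
      = (t + (p - 1 - S.card)).choose p := by
  classical
  set a := p - 1 - S.card with ha
  set c : ℕ → ℕ := fun k => ((Finset.range k).filter (fun x => x ∉ S)).card with hc
  have hcsucc : ∀ k, c (k + 1) = c k + if k ∈ S then 0 else 1 := by
    intro k
    simp only [hc, Finset.range_add_one, Finset.filter_insert]
    split_ifs with h
    · simp [h]
    · rw [Finset.card_insert_of_notMem (by simp)]
  have hck : ∀ k, c k ≤ k := by
    intro k
    calc c k ≤ (Finset.range k).card := Finset.card_filter_le _ _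
    _ = k := Finset.card_range k
  have hmono : Monotone c := by
    intro i j hij
    exact Finset.card_le_card
      (Finset.filter_subset_filter _ (Finset.range_subset_range.2 hij))
  have hclast : c (p - 1) = a := by
    have h1 := Finset.card_filter_add_card_filter_not
      (s := Finset.range (p - 1)) (p := fun x => x ∈ S)
    have h2 : (Finset.range (p - 1)).filter (fun x => x ∈ S) = S := by
      rw [Finset.filter_mem_eq_inter]
      exact Finset.inter_eq_right.2 hS
    rw [h2, Finset.card_range] at h1
    simp only [hc, ha]
    omega
  have hlip : ∀ j k : ℕ, j ≤ k → c k ≤ c j + (k - j) := by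
    have key : ∀ j m : ℕ, c (j + m) ≤ c j + m := by
      intro j m
      induction m with
      | zero => simp
      | succ n ih =>
        have := hcsucc (j + n)
        rw [← Nat.add_assoc] at *
        split_ifs at this <;> omega
    intro j k hjk
    have := key j (k - j)
    rwa [Nat.add_sub_cancel' hjk] at this
  -- the equivalence with strictly monotone maps
  have e : {g : Fin p → Fin t // ChainCond p t S g} ≃
      {h : Fin p → Fin (t + a) // StrictMono h} := by
    refine
    { toFun := fun g => ⟨fun k => ⟨(g.1 k : ℕ) + c k, ?_⟩, ?_⟩
      invFun := fun h => ⟨fun k => ⟨(h.1 k : ℕ) - c k, ?_⟩, ?_⟩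
      left_inv := ?_
      right_inv := ?_ }
    · -- bound for toFun
      have h1 : (g.1 k : ℕ) < t := (g.1 k).2
      have h2 : c k ≤ a := by
        rw [← hclast]
        have hkp : (k : ℕ) ≤ p - 1 := by have := k.2; omega
        exact hmono hkp
      omega
    · -- strict mono
      apply finStrictMonoOfAdj
      intro k hk
      have hcc := hcsucc k
      have h1 := (g.2 k hk).1
      rw [Fin.le_def] at h1
      simp only [Fin.lt_def, Fin.mk_lt_mk]
      by_cases hkS : k ∈ S
      · have h2 := (g.2 k hk).2 hkS
        rw [Fin.lt_def] at h2
        simp only [hkS, if_true] at hcc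
        omega
      · simp only [hkS, if_false] at hcc
        omega
    · -- bound for invFun
      have hp : 0 < p := by have := k.2; omega
      have hgap := finStrictMonoGap h.2 k ⟨p - 1, by omega⟩ (by simp; have := k.2; omega)
      have h1 : (h.1 ⟨p - 1, by omega⟩ : ℕ) < t + a := (h.1 _).2
      have h2 : a ≤ c k + (p - 1 - (k : ℕ)) := by
        rw [← hclast]
        exact hlip _ _ (by have := k.2; omega)
      have hgap0 := finStrictMonoGap h.2 ⟨0, by omega⟩ k (by simp)
      have hc0 := hck (k : ℕ)
      simp only at hgap hgap0
      omega
    · -- ChainCond for invFun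
      intro k hk
      have hcc := hcsucc k
      have hstep : (h.1 ⟨k, by omega⟩ : ℕ) < h.1 ⟨k + 1, hk⟩ := h.2 (by simp [Fin.lt_def])
      have hle1 : c k ≤ (h.1 ⟨k, by omega⟩ : ℕ) := by
        have hgap := finStrictMonoGap h.2 ⟨0, by omega⟩ ⟨k, by omega⟩ (by simp)
        have := hck k
        simp only at hgap
        omega
      constructor
      · rw [Fin.le_def]
        simp only [Fin.mk_le_mk]
        split_ifs at hcc <;> omega
      · intro hkS
        rw [Fin.lt_def]
        simp only [Fin.mk_lt_mk, hkS, if_true] at hcc ⊢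
        omega
    · -- left_inv
      intro g
      apply Subtype.ext
      funext k
      apply Fin.ext
      simp
    · -- right_inv
      intro h
      apply Subtype.ext
      funext k
      apply Fin.ext
      have hle1 : c k ≤ (h.1 k : ℕ) := by
        have hgap := finStrictMonoGap h.2 ⟨0, by have := k.2; omega⟩ k (by simp)
        have := hck (k : ℕ)
        simp only at hgap
        omega
      simp only
      omega
  rw [Nat.card_congr e, cardStrictMonoFin]

end chain


open Finset

lemma existsLinExtEquiv (p : ℕ) (r : Fin p → Fin p → Prop) (hr : IsPartialOrder (Fin p) r) :
    ∃ τ : Fin p ≃ Fin p, ∀ i j, r i j → τ i ≤ τ j := by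
  classical
  haveI := hr
  obtain ⟨s, hs, hrs⟩ := extend_partialOrder r
  haveI := hs
  set k : Fin p → ℕ := fun i => (Finset.univ.filter (fun j => s j i ∧ j ≠ i)).card with hk
  have hki : ∀ i, k i < p := by
    intro i
    have h1 : (Finset.univ.filter (fun j => s j i ∧ j ≠ i)) ⊂ Finset.univ := by
      rw [Finset.ssubset_univ_iff]
      intro h
      have : i ∈ Finset.univ.filter (fun j => s j i ∧ j ≠ i) := by rw [h]; exact Finset.mem_univ i
      simp at this
    calc k i < Finset.univ.card := Finset.card_lt_card h1
    _ = p := by simp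
  have hsub : ∀ i j, i ≠ j → s i j →
      (Finset.univ.filter (fun x => s x i ∧ x ≠ i)) ⊆
        (Finset.univ.filter (fun x => s x j ∧ x ≠ j)) := by
    intro i j hij hsij x hx
    simp only [Finset.mem_filter, Finset.mem_univ, true_and] at hx ⊢
    obtain ⟨h1, h2⟩ := hx
    refine ⟨hs.trans _ _ _ h1 hsij, ?_⟩
    rintro rfl
    exact hij (hs.antisymm _ _ hsij h1)
  have hstrict : ∀ i j, i ≠ j → s i j → k i < k j := by
    intro i j hij hsij
    have hmem : i ∈ Finset.univ.filter (fun x => s x j ∧ x ≠ j) := by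
      simp only [Finset.mem_filter, Finset.mem_univ, true_and]
      exact ⟨hsij, hij⟩
    have hnot : i ∉ Finset.univ.filter (fun x => s x i ∧ x ≠ i) := by simp
    have := Finset.card_lt_card
      (Finset.ssubset_iff_of_subset (hsub i j hij hsij) |>.2 ⟨i, hmem, hnot⟩)
    exact this
  have hinj : Function.Injective (fun i => (⟨k i, hki i⟩ : Fin p)) := by
    intro i j hij
    by_contra hne
    simp only [Fin.mk.injEq] at hij
    rcases hs.total i j with h | h
    · exact absurd hij (Nat.ne_of_lt (hstrict i j hne h))
    · exact absurd hij.symm (Nat.ne_of_lt (hstrict j i (Ne.symm hne) h))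
  refine ⟨Equiv.ofBijective _ (Finite.injective_iff_bijective.1 hinj), ?_⟩
  intro i j hij
  by_cases hne : i = j
  · subst hne; exact le_refl _
  · have := hstrict i j hne (hrs i j hij)
    simp only [Equiv.ofBijective_apply, Fin.mk_le_mk]
    omega



open Finset

open scoped Classical in
/-- descent set of a linear extension `σ` relative to the reference extension `τ` -/
noncomputable def Descents (p : ℕ) (τ σ : Fin p ≃ Fin p) : Finset ℕ :=
  (Finset.range (p - 1)).filter
    (fun k => ∃ hk : k + 1 < p, τ (σ.symm ⟨k + 1, hk⟩) < τ (σ.symm ⟨k, by omega⟩))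

lemma descents_subset (p : ℕ) (τ σ : Fin p ≃ Fin p) :
    Descents p τ σ ⊆ Finset.range (p - 1) := Finset.filter_subset _ _

open scoped Classical in
lemma orderPoly_eq_sum (p t : ℕ) (r : Fin p → Fin p → Prop)
    (τ : Fin p ≃ Fin p) (hτ : ∀ i j, r i j → τ i ≤ τ j) :
    orderPoly p r t = ∑ σ : {σ : Fin p ≃ Fin p // ∀ i j, r i j → σ i ≤ σ j},
      (t + (p - 1 - (Descents p τ σ.1).card)).choose p := by
  classical
  -- KEY: the linear extension associated to a compatible pair is determined by sorting
  have key : ∀ (σ : Fin p ≃ Fin p), (∀ i j, r i j → σ i ≤ σ j) →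
      ∀ (g : Fin p → Fin t), ChainCond p t (Descents p τ σ) g →
      σ.symm.trans τ = Tuple.sort (fun k => g (σ (τ.symm k))) := by
    intro σ hσ g hg
    have hmg : Monotone g := finMonotoneOfAdj (fun k hk => (hg k hk).1)
    set h : Fin p → Fin p := fun x => τ (σ.symm x) with hh
    have hadj : ∀ (k : ℕ) (hk : k + 1 < p),
        g ⟨k, by omega⟩ = g ⟨k + 1, hk⟩ → h ⟨k, by omega⟩ < h ⟨k + 1, hk⟩ := by
      intro k hk hgk
      have hne : h ⟨k, by omega⟩ ≠ h ⟨k + 1, hk⟩ := by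
        simp only [hh]
        intro heq
        have := σ.symm.injective (τ.injective heq)
        simp only [Fin.mk.injEq] at this
        omega
      have hnotmem : k ∉ Descents p τ σ := by
        intro hmem
        have := (hg k hk).2 hmem
        rw [hgk] at this
        exact lt_irrefl _ this
      have hnlt : ¬ (h ⟨k + 1, hk⟩ < h ⟨k, by omega⟩) := by
        intro hlt
        apply hnotmem
        simp only [Descents, Finset.mem_filter, Finset.mem_range]
        exact ⟨by omega, hk, hlt⟩
      exact lt_of_le_of_ne (not_lt.1 hnlt) hne
    set H : Fin p → ℕ := fun x => (g x : ℕ) * p + (h x : ℕ) with hH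
    have hHs : StrictMono H := by
      apply finStrictMonoOfAdj
      intro k hk
      have h1 := (hg k hk).1
      rw [Fin.le_def] at h1
      rcases eq_or_lt_of_le h1 with heq | hlt
      · have heq' : g ⟨k, by omega⟩ = g ⟨k + 1, hk⟩ := Fin.ext heq
        have := hadj k hk heq'
        rw [Fin.lt_def] at this
        have hmul : (g ⟨k, by omega⟩ : ℕ) * p = (g ⟨k + 1, hk⟩ : ℕ) * p := by rw [heq]
        simp only [hH]
        omega
      · have hb : (h ⟨k, by omega⟩ : ℕ) < p := (h _).2
        have hb2 : (h ⟨k + 1, hk⟩ : ℕ) < p := (h _).2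
        simp only [hH]
        have : (g ⟨k, by omega⟩ : ℕ) + 1 ≤ (g ⟨k + 1, hk⟩ : ℕ) := hlt
        nlinarith
    rw [Tuple.eq_sort_iff]
    constructor
    · have hco : ((fun k => g (σ (τ.symm k))) ∘ ⇑(σ.symm.trans τ)) = g := by
        funext x
        simp
      rw [hco]
      exact hmg
    · intro i j hij heq
      simp only [Function.comp, Equiv.trans_apply, Equiv.symm_apply_apply,
        Equiv.apply_symm_apply] at heq
      have hHij := hHs hij
      have heq' : (g i : ℕ) = g j := by rw [heq]
      simp only [hH] at hHij
      have hmul : (g i : ℕ) * p = (g j : ℕ) * p := by rw [heq']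
      show τ (σ.symm i) < τ (σ.symm j)
      have : (h i : ℕ) < h j := by omega
      rwa [← Fin.lt_def] at this
  -- the bijection
  set LE := {σ : Fin p ≃ Fin p // ∀ i j, r i j → σ i ≤ σ j} with hLE
  set B : (Σ σ : LE, {g : Fin p → Fin t // ChainCond p t (Descents p τ σ.1) g}) →
      {f : Fin p → Fin t // ∀ i j, r i j → f i ≤ f j} :=
    fun x => ⟨fun i => x.2.1 (x.1.1 i),
      fun i j hij => (finMonotoneOfAdj (fun k hk => (x.2.2 k hk).1)) (x.1.2 i j hij)⟩
    with hB
  have hBbij : Function.Bijective B := by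
    constructor
    · rintro ⟨⟨σx, hσx⟩, ⟨gx, hgx⟩⟩ ⟨⟨σy, hσy⟩, ⟨gy, hgy⟩⟩ hxy
      simp only [hB, Subtype.mk.injEq] at hxy
      have e1 : σx.symm.trans τ = σy.symm.trans τ := by
        rw [key σx hσx gx hgx, key σy hσy gy hgy]
        congr 1
        funext k
        exact congrFun hxy (τ.symm k)
      have e2 : σx = σy := by
        have e3 : σx.symm = σy.symm := by
          apply Equiv.ext
          intro i
          apply τ.injective
          exact DFunLike.congr_fun e1 i
        have := congrArg Equiv.symm e3
        simpa using this
      subst e2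
      have e4 : gx = gy := by
        funext k
        have := congrFun hxy (σx.symm k)
        simpa using this
      subst e4
      rfl
    · rintro ⟨f, hf⟩
      set f' : Fin p → Fin t := fun k => f (τ.symm k) with hf'
      set π : Equiv.Perm (Fin p) := Tuple.sort f' with hπ
      have hsort := (Tuple.eq_sort_iff (f := f') (σ := π)).mp rfl
      set σf : Fin p ≃ Fin p := τ.trans π.symm with hσf
      have hσfs : ∀ x, τ (σf.symm x) = π x := by
        intro x
        simp [hσf]
      have hσfLE : ∀ i j, r i j → σf i ≤ σf j := by
        intro i j hij
        by_cases hne : i = j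
        · subst hne; exact le_refl _
        · have h1 : f i ≤ f j := hf i j hij
          have h2 : τ i < τ j := lt_of_le_of_ne (hτ i j hij) (fun h => hne (τ.injective h))
          show π.symm (τ i) ≤ π.symm (τ j)
          by_contra hc
          rw [not_le] at hc
          have h3 : f' (π (π.symm (τ j))) ≤ f' (π (π.symm (τ i))) := hsort.1 (le_of_lt hc)
          simp only [Equiv.apply_symm_apply, hf', Equiv.symm_apply_apply] at h3
          have h4 : f' (π (π.symm (τ j))) = f' (π (π.symm (τ i))) := by
            simp only [Equiv.apply_symm_apply, hf', Equiv.symm_apply_apply]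
            exact le_antisymm h3 h1
          have h5 := hsort.2 _ _ hc h4
          simp only [Equiv.apply_symm_apply] at h5
          exact absurd h2 (not_lt.2 (le_of_lt h5))
      set g : Fin p → Fin t := fun k => f' (π k) with hg
      have hgc : ChainCond p t (Descents p τ σf) g := by
        intro k hk
        have hle : g ⟨k, by omega⟩ ≤ g ⟨k + 1, hk⟩ := by
          apply hsort.1
          simp [Fin.le_def]
        refine ⟨hle, ?_⟩
        intro hmem
        simp only [Descents, Finset.mem_filter, Finset.mem_range] at hmem
        obtain ⟨-, hk', hlt⟩ := hmem
        rw [hσfs, hσfs] at hlt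
        refine lt_of_le_of_ne hle ?_
        intro heq
        have := hsort.2 ⟨k, by omega⟩ ⟨k + 1, hk⟩ (by simp [Fin.lt_def]) (by exact heq)
        exact absurd hlt (not_lt.2 (le_of_lt this))
      refine ⟨⟨⟨σf, hσfLE⟩, ⟨g, hgc⟩⟩, ?_⟩
      simp only [hB]
      apply Subtype.ext
      funext i
      simp [hg, hf', hσf]
  haveI : ∀ σ : LE, Fintype {g : Fin p → Fin t // ChainCond p t (Descents p τ σ.1) g} :=
    fun σ => Fintype.ofFinite _
  calc orderPoly p r t
      = Nat.card (Σ σ : LE, {g : Fin p → Fin t // ChainCond p t (Descents p τ σ.1) g}) :=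
        (Nat.card_eq_of_bijective B hBbij).symm
    _ = ∑ σ : LE, Nat.card {g : Fin p → Fin t // ChainCond p t (Descents p τ σ.1) g} := by
        rw [Nat.card_eq_fintype_card, Fintype.card_sigma]
        apply Finset.sum_congr rfl
        intro σ _
        rw [Nat.card_eq_fintype_card]
    _ = ∑ σ : LE, (t + (p - 1 - (Descents p τ σ.1).card)).choose p := by
        apply Finset.sum_congr rfl
        intro σ _
        rw [chainCount p t _ (descents_subset p τ σ.1)]


open Finset Polynomial

lemma evalChoose (p d : ℕ) (hd : d ≤ p - 1) (t : ℕ) (ht : 1 ≤ t) :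
    Polynomial.eval (t : ℝ) (Polynomial.C ((p.factorial : ℝ)⁻¹) *
      ∏ i ∈ Finset.range p, (Polynomial.X + Polynomial.C ((i : ℝ) - d)))
      = ((t + (p - 1 - d)).choose p : ℝ) := by
  rcases Nat.eq_zero_or_pos p with hp | hp
  · subst hp
    simp
  rw [eval_mul, eval_C, eval_prod]
  simp only [eval_add, eval_X, eval_C]
  rcases le_or_gt (d + 1) t with h | h
  · have hcast : ∀ i ∈ Finset.range p, (t : ℝ) + ((i : ℝ) - d) = ((t - d + i : ℕ) : ℝ) := by
      intro i _
      push_cast [Nat.cast_sub (by omega : d ≤ t)]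
      ring
    rw [Finset.prod_congr rfl hcast, ← Nat.cast_prod, prodRangeAdd,
      Nat.ascFactorial_eq_factorial_mul_choose']
    have harith : t - d + p - 1 = t + (p - 1 - d) := by omega
    rw [harith]
    push_cast
    rw [← mul_assoc, inv_mul_cancel₀ (Nat.cast_ne_zero.2 p.factorial_ne_zero), one_mul]
  · have hmem : d - t ∈ Finset.range p := by
      simp only [Finset.mem_range]
      omega
    have hzero : (t : ℝ) + (((d - t : ℕ) : ℝ) - d) = 0 := by
      push_cast [Nat.cast_sub (by omega : t ≤ d)]
      ring
    rw [Finset.prod_eq_zero hmem hzero, mul_zero,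
      Nat.choose_eq_zero_of_lt (by omega), Nat.cast_zero]

open scoped Classical in
/-- the order polynomial agrees with a polynomial in `t` of degree `p`
with leading coefficient `e(P)/p!`. -/
theorem order_polynomial_degree_leadingCoeff (p : ℕ) (r : Fin p → Fin p → Prop)
    (hr : IsPartialOrder (Fin p) r) :
    ∃ q : Polynomial ℝ, q.natDegree = p ∧
      q.leadingCoeff = (linExt p r : ℝ) / (Nat.factorial p : ℝ) ∧
      ∀ t : ℕ, 1 ≤ t → q.eval (t : ℝ) = (orderPoly p r t : ℝ) := by
  obtain ⟨τ, hτ⟩ := existsLinExtEquiv p r hr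
  set dd : {σ : Fin p ≃ Fin p // ∀ i j, r i j → σ i ≤ σ j} → ℕ :=
    fun σ => (Descents p τ σ.1).card with hdd
  have hddle : ∀ σ, dd σ ≤ p - 1 := by
    intro σ
    have := Finset.card_le_card (descents_subset p τ σ.1)
    simpa using this
  set q : Polynomial ℝ := ∑ σ : {σ : Fin p ≃ Fin p // ∀ i j, r i j → σ i ≤ σ j},
      Polynomial.C ((p.factorial : ℝ)⁻¹) *
        ∏ i ∈ Finset.range p, (Polynomial.X + Polynomial.C ((i : ℝ) - dd σ)) with hq
  have hpos : 0 < Fintype.card {σ : Fin p ≃ Fin p // ∀ i j, r i j → σ i ≤ σ j} :=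
    Fintype.card_pos_iff.2 ⟨⟨τ, hτ⟩⟩
  have hdeg : ∀ σ, (∏ i ∈ Finset.range p,
      (Polynomial.X + Polynomial.C ((i : ℝ) - dd σ))).natDegree = p := by
    intro σ
    rw [Polynomial.natDegree_prod _ _ (fun i _ => Polynomial.X_add_C_ne_zero _)]
    simp only [Polynomial.natDegree_X_add_C]
    rw [Finset.sum_const, Finset.card_range, smul_eq_mul, mul_one]
  have hmonic : ∀ σ, (∏ i ∈ Finset.range p,
      (Polynomial.X + Polynomial.C ((i : ℝ) - dd σ))).Monic :=
    fun σ => Polynomial.monic_prod_of_monic _ _ (fun i _ => Polynomial.monic_X_add_C _)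
  have hcoeffp : q.coeff p =
      (Fintype.card {σ : Fin p ≃ Fin p // ∀ i j, r i j → σ i ≤ σ j} : ℝ) *
        (p.factorial : ℝ)⁻¹ := by
    rw [hq, Polynomial.finset_sum_coeff]
    have hterm : ∀ σ, (Polynomial.C ((p.factorial : ℝ)⁻¹) *
        ∏ i ∈ Finset.range p, (Polynomial.X + Polynomial.C ((i : ℝ) - dd σ))).coeff p =
          (p.factorial : ℝ)⁻¹ := by
      intro σ
      rw [Polynomial.coeff_C_mul]
      have h1 : (∏ i ∈ Finset.range p,
          (Polynomial.X + Polynomial.C ((i : ℝ) - dd σ))).coeff p = 1 := by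
        have := (hmonic σ).coeff_natDegree
        rwa [hdeg σ] at this
      rw [h1, mul_one]
    rw [Finset.sum_congr rfl (fun σ _ => hterm σ), Finset.sum_const, Finset.card_univ,
      nsmul_eq_mul]
  have hdegle : q.natDegree ≤ p := by
    apply Polynomial.natDegree_sum_le_of_forall_le
    intro σ _
    calc (Polynomial.C ((p.factorial : ℝ)⁻¹) *
        ∏ i ∈ Finset.range p, (Polynomial.X + Polynomial.C ((i : ℝ) - dd σ))).natDegree
        ≤ _ + _ := Polynomial.natDegree_mul_le
      _ ≤ p := by
          rw [Polynomial.natDegree_C, zero_add]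
          exact le_of_eq (hdeg σ)
  have hcne : q.coeff p ≠ 0 := by
    rw [hcoeffp]
    exact mul_ne_zero (Nat.cast_ne_zero.2 hpos.ne')
      (inv_ne_zero (Nat.cast_ne_zero.2 p.factorial_ne_zero))
  have hqdeg : q.natDegree = p :=
    le_antisymm hdegle (Polynomial.le_natDegree_of_ne_zero hcne)
  refine ⟨q, hqdeg, ?_, ?_⟩
  · rw [Polynomial.leadingCoeff, hqdeg, hcoeffp, div_eq_mul_inv]
    congr 2
    simp only [linExt]
    rw [Nat.card_eq_fintype_card]
  · intro t ht
    rw [orderPoly_eq_sum p t r τ hτ, hq, Polynomial.eval_finset_sum]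
    push_cast
    exact Finset.sum_congr rfl (fun σ _ => evalChoose p (dd σ) (hddle σ) t ht)
end

section
/- The (normalized) volume of the order polytope O(P) equals e(P)/p!, where e(P) is the number of linear extensions of the finite poset P on [p]. -/
open MeasureTheory

namespace OPvol

variable {p : ℕ}

def cube (p : ℕ) : Set (Fin p → ℝ) := {x | ∀ i, 0 ≤ x i ∧ x i ≤ 1}

def simpl (σ : Equiv.Perm (Fin p)) : Set (Fin p → ℝ) :=
  cube p ∩ {x | ∀ i j, σ i ≤ σ j → x i ≤ x j}

lemma cube_eq : cube p = Set.pi Set.univ (fun _ : Fin p => Set.Icc (0:ℝ) 1) := by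
  ext x; simp [cube, Set.mem_pi, Set.mem_Icc, forall_and, Pi.le_def]

lemma measurableSet_cube : MeasurableSet (cube p) := by
  rw [cube_eq]; exact MeasurableSet.univ_pi fun _ => measurableSet_Icc

lemma measurableSet_rel (σ : Equiv.Perm (Fin p)) :
    MeasurableSet {x : Fin p → ℝ | ∀ i j, σ i ≤ σ j → x i ≤ x j} := by
  have h : {x : Fin p → ℝ | ∀ i j, σ i ≤ σ j → x i ≤ x j}
      = ⋂ i, ⋂ j, {x : Fin p → ℝ | σ i ≤ σ j → x i ≤ x j} := by
    ext x; simp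
  rw [h]
  refine MeasurableSet.iInter fun i => MeasurableSet.iInter fun j => ?_
  by_cases hc : σ i ≤ σ j
  · have : {x : Fin p → ℝ | σ i ≤ σ j → x i ≤ x j} = {x | x i ≤ x j} := by
      ext x; simp [hc]
    rw [this]
    exact measurableSet_le (measurable_pi_apply i) (measurable_pi_apply j)
  · have : {x : Fin p → ℝ | σ i ≤ σ j → x i ≤ x j} = Set.univ := by
      ext x; simp [hc]
    rw [this]; exact MeasurableSet.univ

lemma measurableSet_simpl (σ : Equiv.Perm (Fin p)) : MeasurableSet (simpl σ) :=
  measurableSet_cube.inter (measurableSet_rel σ)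

lemma volume_cube : volume (cube p) = 1 := by
  rw [cube_eq, volume_pi_pi]
  simp

lemma volume_eq_coords (i j : Fin p) (hij : i ≠ j) :
    volume {x : Fin p → ℝ | x i = x j} = 0 := by
  have h : {x : Fin p → ℝ | x i = x j}
      = (LinearMap.ker ((LinearMap.proj i : (Fin p → ℝ) →ₗ[ℝ] ℝ) - LinearMap.proj j) : Set _) := by
    ext x
    simp [LinearMap.mem_ker, sub_eq_zero]
  rw [h]
  refine Measure.addHaar_submodule _ _ ?_
  intro htop
  have h1 : (Pi.single i 1 : Fin p → ℝ) ∈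
      LinearMap.ker ((LinearMap.proj i : (Fin p → ℝ) →ₗ[ℝ] ℝ) - LinearMap.proj j) := by
    rw [htop]; trivial
  simp [LinearMap.mem_ker, Pi.single_apply, hij, hij.symm] at h1

lemma exists_simpl (x : Fin p → ℝ) : ∃ σ : Equiv.Perm (Fin p), ∀ i j, σ i ≤ σ j → x i ≤ x j := by
  refine ⟨(Tuple.sort x)⁻¹, fun i j hij => ?_⟩
  have h2 : x (Tuple.sort x ((Tuple.sort x)⁻¹ i)) ≤ x (Tuple.sort x ((Tuple.sort x)⁻¹ j)) :=
    Tuple.monotone_sort x hij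
  simpa using h2

/-- a monotone permutation of `Fin p` is the identity -/
lemma perm_monotone_eq_id (ρ : Equiv.Perm (Fin p)) (hm : Monotone ρ) : ∀ a, ρ a = a := by
  have hsm : StrictMono ρ := hm.strictMono_of_injective ρ.injective
  have := Subsingleton.elim (StrictMono.orderIsoOfSurjective ρ hsm ρ.surjective)
    (OrderIso.refl (Fin p))
  intro a
  have : (StrictMono.orderIsoOfSurjective ρ hsm ρ.surjective) a = (OrderIso.refl (Fin p)) a := by
    rw [this]
  simpa using this

lemma aedisjoint_simpl {σ τ : Equiv.Perm (Fin p)} (h : σ ≠ τ) :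
    AEDisjoint volume (simpl σ) (simpl τ) := by
  have hρ : ¬ Monotone (τ * σ⁻¹ : Equiv.Perm (Fin p)) := by
    intro hm
    apply h
    have := perm_monotone_eq_id _ hm
    refine Equiv.ext fun a => ?_
    have h2 := this (σ a)
    simpa [Equiv.Perm.mul_apply] using h2.symm
  rw [Monotone] at hρ
  push_neg at hρ
  obtain ⟨a, b, hab, hba⟩ := hρ
  set i := σ⁻¹ a with hi
  set j := σ⁻¹ b with hj
  have hσi : σ i = a := by simp [hi]
  have hσj : σ j = b := by simp [hj]
  have hij : i ≠ j := by
    intro hije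
    rw [hije] at hσi
    rw [hσi] at hσj
    rw [hσj] at hba
    exact lt_irrefl _ hba
  have hsub : simpl σ ∩ simpl τ ⊆ {x : Fin p → ℝ | x i = x j} := by
    rintro x ⟨⟨-, hxσ⟩, ⟨-, hxτ⟩⟩
    have h1 : x i ≤ x j := hxσ i j (by rw [hσi, hσj]; exact hab)
    have h2 : x j ≤ x i := by
      refine hxτ j i ?_
      have : (τ * σ⁻¹ : Equiv.Perm (Fin p)) b ≤ (τ * σ⁻¹ : Equiv.Perm (Fin p)) a := le_of_lt hba
      simpa [Equiv.Perm.mul_apply, ← hi, ← hj] using this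
    exact le_antisymm h1 h2
  exact measure_mono_null hsub (volume_eq_coords i j hij)

/-- all simplices have the same volume -/
lemma volume_simpl_eq (σ : Equiv.Perm (Fin p)) :
    volume (simpl σ) = volume (simpl (1 : Equiv.Perm (Fin p))) := by
  have hmp := volume_measurePreserving_piCongrLeft (fun _ : Fin p => ℝ) (σ : Fin p ≃ Fin p)
  have happ : ∀ (x : Fin p → ℝ) (k : Fin p),
      (MeasurableEquiv.piCongrLeft (fun _ : Fin p => ℝ) (σ : Fin p ≃ Fin p)) x k
        = x (σ.symm k) := by
    intro x k
    simp [MeasurableEquiv.coe_piCongrLeft, Equiv.piCongrLeft_apply, eq_rec_constant]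
  have hpre : (MeasurableEquiv.piCongrLeft (fun _ : Fin p => ℝ) (σ : Fin p ≃ Fin p)) ⁻¹'
      (simpl (1 : Equiv.Perm (Fin p))) = simpl σ := by
    ext x
    constructor
    · rintro ⟨hc, hrel⟩
      refine ⟨fun i => ?_, fun i j hij => ?_⟩
      · have := hc (σ i)
        rwa [happ, Equiv.symm_apply_apply] at this
      · have := hrel (σ i) (σ j) (by simpa using hij)
        rwa [happ, happ, Equiv.symm_apply_apply, Equiv.symm_apply_apply] at this
    · rintro ⟨hc, hrel⟩
      refine ⟨fun k => ?_, fun i j hij => ?_⟩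
      · rw [happ]; exact hc _
      · rw [happ, happ]
        refine hrel _ _ ?_
        simpa [Equiv.apply_symm_apply] using hij
  rw [← hpre]
  exact hmp.measure_preimage (measurableSet_simpl 1).nullMeasurableSet

lemma cube_eq_union : cube p = ⋃ σ : Equiv.Perm (Fin p), simpl σ := by
  apply Set.Subset.antisymm
  · intro x hx
    obtain ⟨σ, hσ⟩ := exists_simpl x
    exact Set.mem_iUnion.2 ⟨σ, hx, hσ⟩
  · exact Set.iUnion_subset fun σ => Set.inter_subset_left

lemma sum_volume_simpl :
    ∑ σ : Equiv.Perm (Fin p), volume (simpl σ) = 1 := by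
  rw [← volume_cube (p := p), cube_eq_union,
    measure_iUnion₀ (fun σ τ hστ => aedisjoint_simpl hστ)
      (fun σ => (measurableSet_simpl σ).nullMeasurableSet), tsum_fintype]

lemma volume_simpl_one : volume (simpl (1 : Equiv.Perm (Fin p))) = 1 / (Nat.factorial p) := by
  have hs := sum_volume_simpl (p := p)
  have hconst : ∀ σ ∈ Finset.univ, volume (simpl σ) = volume (simpl (1 : Equiv.Perm (Fin p))) :=
    fun σ _ => volume_simpl_eq σ
  rw [Finset.sum_congr rfl hconst, Finset.sum_const, Finset.card_univ, Fintype.card_perm,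
    Fintype.card_fin, nsmul_eq_mul] at hs
  have hfac : (p.factorial : ENNReal) ≠ 0 := by
    exact_mod_cast Nat.cast_ne_zero.2 (Nat.factorial_ne_zero p)
  have hfact : (p.factorial : ENNReal) ≠ ⊤ := ENNReal.natCast_ne_top _
  rw [one_div]
  calc volume (simpl (1 : Equiv.Perm (Fin p)))
      = (p.factorial : ENNReal)⁻¹ *
        ((p.factorial : ENNReal) * volume (simpl (1 : Equiv.Perm (Fin p)))) := by
        rw [← mul_assoc, ENNReal.inv_mul_cancel hfac hfact, one_mul]
    _ = (p.factorial : ENNReal)⁻¹ := by rw [hs, mul_one]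

end OPvol

open OPvol
/-- the volume of the order polytope is `e(P)/p!`, where `e(P)` is the
number of linear extensions of `P`. -/
theorem volume_orderPolytope (p : ℕ) (r : Fin p → Fin p → Prop)
    (hr : IsPartialOrder (Fin p) r) :
    MeasureTheory.volume (orderPolytope p r) =
      (linExt p r : ENNReal) / (Nat.factorial p : ENNReal) := by
  classical
  set E : Finset (Equiv.Perm (Fin p)) :=
    Finset.univ.filter (fun σ => ∀ i j, r i j → σ i ≤ σ j) with hE
  -- linExt = E.card
  have hcard : linExt p r = E.card := by
    rw [linExt, Nat.card_eq_fintype_card, Fintype.card_subtype]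
  -- the union over E
  have hsub : (⋃ σ ∈ E, simpl σ) ⊆ orderPolytope p r := by
    refine Set.iUnion₂_subset fun σ hσ => ?_
    rw [hE, Finset.mem_filter] at hσ
    rintro x ⟨hc, hrel⟩
    exact ⟨hc, fun i j hij => hrel i j (hσ.2 i j hij)⟩
  -- the complement part is null
  have hnull : volume (orderPolytope p r \ ⋃ σ ∈ E, simpl σ) = 0 := by
    have hcover : orderPolytope p r \ (⋃ σ ∈ E, simpl σ)
        ⊆ ⋃ σ ∈ (Finset.univ \ E), orderPolytope p r ∩ simpl σ := by
      rintro x ⟨hx, hnx⟩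
      obtain ⟨σ, hσ⟩ := exists_simpl x
      have hxs : x ∈ simpl σ := ⟨hx.1, hσ⟩
      have hσE : σ ∉ E := by
        intro hmem
        exact hnx (Set.mem_biUnion hmem hxs)
      exact Set.mem_biUnion (Finset.mem_sdiff.2 ⟨Finset.mem_univ σ, hσE⟩) ⟨hx, hxs⟩
    refine measure_mono_null hcover ?_
    rw [← Finset.set_biUnion_coe]
    refine (measure_biUnion_null_iff (Finset.univ \ E).countable_toSet).2 ?_
    intro σ hσ
    rw [Finset.coe_sdiff, Set.mem_diff, Finset.coe_univ] at hσ
    have hσE : σ ∉ E := hσ.2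
    rw [hE, Finset.mem_filter, not_and] at hσE
    have : ¬ ∀ i j, r i j → σ i ≤ σ j := hσE (Finset.mem_univ σ)
    push_neg at this
    obtain ⟨i, j, hrij, hσij⟩ := this
    have hij : i ≠ j := by
      intro hije; rw [hije] at hσij; exact lt_irrefl _ hσij
    have hsub2 : orderPolytope p r ∩ simpl σ ⊆ {x : Fin p → ℝ | x i = x j} := by
      rintro x ⟨⟨-, hrel⟩, ⟨-, hsrel⟩⟩
      exact le_antisymm (hrel i j hrij) (hsrel j i (le_of_lt hσij))
    exact measure_mono_null hsub2 (volume_eq_coords i j hij)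
  -- conclude
  have hle : volume (orderPolytope p r) ≤ volume (⋃ σ ∈ E, simpl σ) := by
    calc volume (orderPolytope p r)
        ≤ volume ((⋃ σ ∈ E, simpl σ) ∪ (orderPolytope p r \ ⋃ σ ∈ E, simpl σ)) := by
          refine measure_mono fun x hx => ?_
          by_cases hxu : x ∈ ⋃ σ ∈ E, simpl σ
          · exact Or.inl hxu
          · exact Or.inr ⟨hx, hxu⟩
      _ ≤ volume (⋃ σ ∈ E, simpl σ) + volume (orderPolytope p r \ ⋃ σ ∈ E, simpl σ) :=
          measure_union_le _ _
      _ = volume (⋃ σ ∈ E, simpl σ) := by rw [hnull, add_zero]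
  have heq : volume (orderPolytope p r) = volume (⋃ σ ∈ E, simpl σ) :=
    le_antisymm hle (measure_mono hsub)
  rw [heq,
    measure_biUnion_finset₀ (fun σ _ τ _ hστ => aedisjoint_simpl hστ)
      (fun σ _ => (measurableSet_simpl σ).nullMeasurableSet)]
  rw [Finset.sum_congr rfl (fun σ _ => volume_simpl_eq σ), Finset.sum_const, nsmul_eq_mul,
    volume_simpl_one, hcard]
  rw [one_div, div_eq_mul_inv]
end

section
/- If f(x) = a_m x^m + ... + a_0 is a real polynomial with nonnegative coefficients, a_0 > 0, a_m > 0, and all roots real, then its coefficient sequence is unimodal. -/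
open Polynomial

private lemma prodMonic (s : Multiset ℝ) : ((s.map (fun t => X + C t)).prod).Monic :=
  monic_multiset_prod_of_monic _ _ (fun t _ => monic_X_add_C t)

private lemma prodDeg (s : Multiset ℝ) :
    ((s.map (fun t => X + C t)).prod).natDegree = Multiset.card s := by
  rw [natDegree_multiset_prod_of_monic _ (fun p hp => by
    obtain ⟨t, _, rfl⟩ := Multiset.mem_map.1 hp; exact monic_X_add_C t)]
  simp [Multiset.map_map, Function.comp]

private lemma auxLC (s : Multiset ℝ) (hs : ∀ x ∈ s, 0 < x) :
    (∀ i ≤ Multiset.card s, 0 < ((s.map (fun t => X + C t)).prod).coeff i) ∧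
    (∀ i, ((s.map (fun t => X + C t)).prod).coeff i *
        ((s.map (fun t => X + C t)).prod).coeff (i+2) ≤
      ((s.map (fun t => X + C t)).prod).coeff (i+1) *
        ((s.map (fun t => X + C t)).prod).coeff (i+1)) := by
  induction s using Multiset.induction_on with
  | empty =>
    refine ⟨fun i hi => ?_, fun i => ?_⟩
    · simp only [Multiset.card_zero, Nat.le_zero] at hi
      subst hi
      simp
    · simp only [Multiset.map_zero, Multiset.prod_zero, coeff_one]
      norm_num
  | cons r s ih =>
    have hr : 0 < r := hs r (Multiset.mem_cons_self r s)
    obtain ⟨gpos, gLC⟩ := ih (fun x hx => hs x (Multiset.mem_cons_of_mem hx))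
    set g := (s.map (fun t => X + C t)).prod with hgdef
    have gnn : ∀ i, 0 ≤ g.coeff i := by
      intro i
      rcases le_or_gt i (Multiset.card s) with h | h
      · exact (gpos i h).le
      · rw [coeff_eq_zero_of_natDegree_lt (by rw [prodDeg]; exact h)]
    have gz : ∀ i, Multiset.card s < i → g.coeff i = 0 := fun i h =>
      coeff_eq_zero_of_natDegree_lt (by rw [prodDeg]; exact h)
    have h3 : ∀ i, g.coeff i * g.coeff (i+3) ≤ g.coeff (i+1) * g.coeff (i+2) := by
      intro i
      rcases le_or_gt (i+2) (Multiset.card s) with h | h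
      · have h1 : 0 < g.coeff (i+1) := gpos _ (by omega)
        have h2 : 0 < g.coeff (i+2) := gpos _ h
        nlinarith [gLC i, gLC (i+1), gnn i, gnn (i+3)]
      · rw [gz (i+3) (by omega), mul_zero]
        exact mul_nonneg (gnn _) (gnn _)
    have hcons : ((r ::ₘ s).map (fun t => X + C t)).prod = X * g + C r * g := by
      rw [Multiset.map_cons, Multiset.prod_cons, ← hgdef, add_mul]
    have hc0 : (((r ::ₘ s).map (fun t => X + C t)).prod).coeff 0 = r * g.coeff 0 := by
      rw [hcons]; simp [coeff_C_mul, mul_coeff_zero]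
    have hcs : ∀ n, (((r ::ₘ s).map (fun t => X + C t)).prod).coeff (n+1)
        = g.coeff n + r * g.coeff (n+1) := by
      intro n; rw [hcons]; simp [coeff_X_mul, coeff_C_mul]
    constructor
    · intro i hi
      rw [Multiset.card_cons] at hi
      match i with
      | 0 => rw [hc0]; exact mul_pos hr (gpos 0 (by omega))
      | n+1 =>
        rw [hcs]
        have : 0 < g.coeff n := gpos n (by omega)
        nlinarith [gnn (n+1)]
    · intro i
      match i with
      | 0 =>
        rw [show (0:ℕ)+2 = 1+1 from rfl, hc0, hcs 0, hcs 1]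
        nlinarith [gLC 0, gnn 0, gnn 1, gnn 2, mul_pos hr hr,
          mul_le_mul_of_nonneg_left (gLC 0) (mul_pos hr hr).le,
          mul_nonneg (mul_nonneg hr.le (gnn 0)) (gnn 1), mul_self_nonneg (g.coeff 0)]
      | n+1 =>
        rw [show n+1+2 = (n+2)+1 from rfl, show n+1+1 = (n+1)+1 from rfl,
          hcs n, hcs (n+1), hcs (n+2), show n+1+1 = n+2 from rfl, show n+2+1 = n+3 from rfl]
        nlinarith [gLC n, gLC (n+1), h3 n, gnn n, gnn (n+1), gnn (n+2), gnn (n+3),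
          hr.le, mul_le_mul_of_nonneg_left (h3 n) hr.le,
          mul_le_mul_of_nonneg_left (gLC (n+1)) (mul_pos hr hr).le]
/-- a real-rooted polynomial with nonnegative coefficients and positive
constant and leading coefficients has a unimodal coefficient sequence. -/
theorem realRooted_unimodal (f : Polynomial ℝ) (m : ℕ) (hm : f.natDegree = m)
    (hnonneg : ∀ i, 0 ≤ f.coeff i) (h0 : 0 < f.coeff 0) (hlead : 0 < f.coeff m)
    (hreal : f.roots.card = m) :
    ∃ k ≤ m, (∀ i j, i ≤ j → j ≤ k → f.coeff i ≤ f.coeff j) ∧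
      (∀ i j, k ≤ i → i ≤ j → j ≤ m → f.coeff j ≤ f.coeff i) := by
  have hf0 : f ≠ 0 := fun h => by simp [h] at h0
  -- all roots are negative
  have hroots : ∀ r ∈ f.roots, r < 0 := by
    intro r hr
    by_contra hge
    push_neg at hge
    have heval : f.eval r = 0 := isRoot_of_mem_roots hr
    have hlt : 0 < f.eval r := by
      rw [eval_eq_sum_range]
      have hle : f.coeff 0 * r ^ 0 ≤ ∑ i ∈ Finset.range (f.natDegree + 1), f.coeff i * r ^ i := by
        apply Finset.single_le_sum (f := fun i => f.coeff i * r ^ i)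
          (fun i _ => mul_nonneg (hnonneg i) (pow_nonneg hge i))
        simp
      simp only [pow_zero, mul_one] at hle
      linarith
    linarith
  -- factorization
  have hsplit : Polynomial.Splits f :=
    (splits_iff_card_roots).mpr (by rw [hreal, hm])
  have hfact := hsplit.eq_prod_roots
  set s : Multiset ℝ := f.roots.map (fun r => -r) with hs
  have hsmem : ∀ x ∈ s, 0 < x := by
    intro x hx
    obtain ⟨r, hr, rfl⟩ := Multiset.mem_map.1 hx
    linarith [hroots r hr]
  have hsprod : (s.map (fun t => X + C t)).prod
      = (f.roots.map (fun a => X - C a)).prod := by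
    rw [hs, Multiset.map_map]
    apply congrArg
    apply Multiset.map_congr rfl
    intro r _
    simp [sub_eq_add_neg]
  have hscard : Multiset.card s = m := by rw [hs, Multiset.card_map, hreal]
  have hlc : 0 < f.leadingCoeff := by
    rwa [Polynomial.leadingCoeff, hm]
  obtain ⟨gpos, gLC⟩ := auxLC s hsmem
  set g := (s.map (fun t => X + C t)).prod with hgdef
  have hco : ∀ i, f.coeff i = f.leadingCoeff * g.coeff i := by
    intro i
    conv_lhs => rw [hfact]
    rw [coeff_C_mul, ← hsprod, hgdef]
  -- positivity, zero above m, log-concavity for f's coefficients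
  set a : ℕ → ℝ := fun i => f.coeff i with ha
  have apos : ∀ i ≤ m, 0 < a i := by
    intro i hi
    rw [ha]
    simp only [hco i]
    exact mul_pos hlc (gpos i (by rwa [hscard]))
  have azero : ∀ i, m < i → a i = 0 := by
    intro i hi
    exact coeff_eq_zero_of_natDegree_lt (by rwa [hm])
  have aLC : ∀ i, a i * a (i+2) ≤ a (i+1) * a (i+1) := by
    intro i
    simp only [ha, hco i, hco (i+1), hco (i+2)]
    have := gLC i
    nlinarith [mul_pos hlc hlc]
  have ann : ∀ i, 0 ≤ a i := hnonneg
  -- P i : strictly decreasing step at i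
  have Pm : a (m+1) < a m := by rw [azero (m+1) (by omega)]; exact apos m le_rfl
  have hex : ∃ i, a (i+1) < a i := ⟨m, Pm⟩
  set k := Nat.find hex with hk
  have hPk : a (k+1) < a k := Nat.find_spec hex
  have hkmin : ∀ j, j < k → a j ≤ a (j+1) := by
    intro j hj
    have := Nat.find_min hex hj
    linarith [not_lt.mp this]
  have hkm : k ≤ m := Nat.find_min' hex Pm
  -- propagation of decreasing steps
  have prop : ∀ l, k ≤ l → l + 1 ≤ m → a (l+1) < a l := by
    intro l hl
    induction l, hl using Nat.le_induction with
    | base => intro _; exact hPk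
    | succ l hl ih =>
      intro hlm
      have hPl : a (l+1) < a l := ih (by omega)
      have hpos : 0 < a (l+1) := apos (l+1) (by omega)
      have h2 : 0 < a l := lt_trans hpos hPl
      nlinarith [aLC l]
  refine ⟨k, hkm, ?_, ?_⟩
  · -- increasing up to k
    intro i j hij hjk
    induction j, hij using Nat.le_induction with
    | base => exact le_rfl
    | succ j hj ih =>
      exact le_trans (ih (by omega)) (hkmin j (by omega))
  · -- decreasing from k to m
    intro i j hki hij hjm
    induction j, hij using Nat.le_induction with
    | base => exact le_rfl
    | succ j hj ih =>
      exact le_trans (prop j (by omega) (by omega)).le (ih (by omega))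
end

section
/- For a finite poset P, the order polynomial satisfies the reciprocity law Ω_P(−t) = (−1)^{|P|} · Ω̄_P(t), where Ω̄_P(t) is the number of strictly order-preserving maps from P to the chain [t] (f(i) < f(j) whenever i ≺_P j), and Ω_P is extended as a polynomial. -/
open Finset


/-- The number of strictly order-preserving maps from `(Fin p, r)` (with `r` the order
`≼`, strict part `≺`) to the chain `[t]`. -/
noncomputable def strictOrderPoly (p : ℕ) (r : Fin p → Fin p → Prop) (t : ℕ) : ℕ :=
  Nat.card {f : Fin p → Fin t // ∀ i j, r i j → i ≠ j → f i < f j}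

namespace OPR

lemma chain_rel {m : ℕ} (Q : Fin (m+1) → Fin (m+1) → Prop)
    (htrans : ∀ a b c, Q a b → Q b c → Q a c)
    {i j : Fin (m+1)} (hij : i < j)
    (h : ∀ k : Fin m, i ≤ k.castSucc → k.succ ≤ j → Q k.castSucc k.succ) : Q i j := by
  obtain ⟨d, hd⟩ : ∃ d : ℕ, (j : ℕ) = (i : ℕ) + d + 1 := ⟨(j:ℕ) - (i:ℕ) - 1, by
    have := (Fin.lt_def).mp hij; omega⟩
  induction d generalizing j with
  | zero =>
    have hk : (i : ℕ) < m := by have := j.isLt; omega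
    have h1 : (⟨(i:ℕ), hk⟩ : Fin m).castSucc = i := by ext; simp
    have h2 : (⟨(i:ℕ), hk⟩ : Fin m).succ = j := by ext; simp; omega
    have := h ⟨(i:ℕ), hk⟩ (by rw [h1]) (by rw [h2])
    rwa [h1, h2] at this
  | succ d ih =>
    have hlt : (i:ℕ) + d + 1 < m + 1 := by have := j.isLt; omega
    set j' : Fin (m+1) := ⟨(i:ℕ) + d + 1, hlt⟩ with hj'
    have hij' : i < j' := by rw [Fin.lt_def]; show (i:ℕ) < (i:ℕ) + d + 1; omega
    have hj'j : j' < j := by rw [Fin.lt_def]; show (i:ℕ) + d + 1 < (j:ℕ); omega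
    have hQ1 : Q i j' := ih hij' (fun k hk1 hk2 => h k hk1 (le_trans hk2 hj'j.le)) rfl
    have hk : (i:ℕ) + d + 1 < m := by have := j.isLt; omega
    have h1 : (⟨(i:ℕ)+d+1, hk⟩ : Fin m).castSucc = j' := by ext; simp; rfl
    have h2 : (⟨(i:ℕ)+d+1, hk⟩ : Fin m).succ = j := by ext; simp; omega
    have hQ2 := h ⟨(i:ℕ)+d+1, hk⟩ (by rw [h1]; exact hij'.le) (by rw [h2])
    rw [h1, h2] at hQ2
    exact htrans _ _ _ hQ1 hQ2

lemma strictMono_gap {n M : ℕ} {g : Fin (n+1) → Fin M} (hg : StrictMono g)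
    {i j : Fin (n+1)} (hij : i ≤ j) : (g i : ℕ) + ((j:ℕ) - (i:ℕ)) ≤ (g j : ℕ) := by
  rcases eq_or_lt_of_le hij with rfl | hlt
  · omega
  · have := chain_rel (fun x y => x < y ∧ (g x : ℕ) + ((y:ℕ) - (x:ℕ)) ≤ (g y : ℕ))
      (fun a b c hab hbc => by
        refine ⟨hab.1.trans hbc.1, ?_⟩
        have h1 := hab.2; have h2 := hbc.2
        have := (Fin.lt_def).mp hab.1; have := (Fin.lt_def).mp hbc.1
        omega)
      hlt
      (fun k _ _ => by
        refine ⟨Fin.castSucc_lt_succ (i := k), ?_⟩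
        have := hg (Fin.castSucc_lt_succ (i := k))
        rw [Fin.lt_def] at this
        simp only [Fin.coe_castSucc, Fin.val_succ]
        omega)
    exact this.2

lemma strictMono_le_apply {n M : ℕ} {g : Fin (n+1) → Fin M} (hg : StrictMono g)
    (i : Fin (n+1)) : (i:ℕ) ≤ (g i : ℕ) := by
  have := strictMono_gap hg (i := (0 : Fin (n+1))) (j := i) (Fin.zero_le i)
  simp only [Fin.val_zero, Nat.sub_zero] at this
  omega

/-- number of elements of `W` below `i` -/
def cgt {n : ℕ} (W : Finset (Fin n)) (i : Fin (n+1)) : ℕ :=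
  (W.filter (fun j => j.val < i.val)).card

lemma cgt_le {n : ℕ} (W : Finset (Fin n)) (i : Fin (n+1)) : cgt W i ≤ W.card :=
  card_le_card (filter_subset _ _)

lemma cgt_le_self {n : ℕ} (W : Finset (Fin n)) (i : Fin (n+1)) : cgt W i ≤ (i:ℕ) := by
  have : (W.filter (fun j => j.val < i.val)).card ≤ (Finset.range (i:ℕ)).card := by
    apply Finset.card_le_card_of_injOn (fun j => j.val)
    · intro a ha; simp only [Finset.mem_coe, mem_filter] at ha; simp [ha.2]
    · intro a _ b _ hab; exact Fin.ext hab
  simpa [cgt] using this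

lemma cgt_ge {n : ℕ} (W : Finset (Fin n)) (i : Fin (n+1)) :
    W.card ≤ cgt W i + (n - (i:ℕ)) := by
  have hsplit : (W.filter (fun j => j.val < i.val)).card
      + (W.filter (fun j => ¬ j.val < i.val)).card = W.card :=
    Finset.card_filter_add_card_filter_not (p := fun j : Fin n => j.val < i.val)
  have : (W.filter (fun j => ¬ j.val < i.val)).card ≤ (Finset.range (n - (i:ℕ))).card := by
    apply Finset.card_le_card_of_injOn (fun j => j.val - i.val)
    · intro a ha; simp only [Finset.mem_coe, mem_filter, not_lt] at ha
      have h1 := a.isLt; have h2 := ha.2; simp; omega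
    · intro a ha b hb hab
      simp only [Finset.mem_coe, mem_filter, not_lt] at ha hb
      have h1 : (a:ℕ) - (i:ℕ) = (b:ℕ) - (i:ℕ) := hab
      have h2 := ha.2; have h3 := hb.2
      exact Fin.ext (by omega)
  simp only [card_range] at this
  unfold cgt
  omega

lemma cgt_succ {n : ℕ} (W : Finset (Fin n)) (i : Fin n) :
    cgt W i.succ = cgt W i.castSucc + (if i ∈ W then 1 else 0) := by
  classical
  unfold cgt
  have hp : ∀ j : Fin n, (j.val < (i.succ : Fin (n+1)).val) ↔ (j.val < (i.castSucc : Fin (n+1)).val ∨ j = i) := by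
    intro j
    simp only [Fin.val_succ, Fin.coe_castSucc, Fin.ext_iff]
    omega
  rw [filter_congr (fun j _ => hp j), filter_or]
  rw [card_union_of_disjoint]
  · congr 1
    by_cases hi : i ∈ W
    · rw [filter_eq', if_pos hi]; simp [hi]
    · rw [filter_eq', if_neg hi]; simp [hi]
  · simp only [disjoint_left, mem_filter]
    rintro a ⟨_, ha⟩ ⟨_, rfl⟩
    simp at ha

/-- the number of strictly monotone maps `Fin m → Fin M` -/
lemma card_strictMono (m M : ℕ) :
    Nat.card {g : Fin m → Fin M // StrictMono g} = M.choose m := by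
  have e : {g : Fin m → Fin M // StrictMono g} ≃ {s : Finset (Fin M) // s.card = m} := by
    refine ⟨fun g => ⟨Finset.image g.1 univ, ?_⟩, fun s => ⟨⇑(s.1.orderEmbOfFin s.2), fun a b hab =>
      (s.1.orderEmbOfFin s.2).strictMono hab⟩, ?_, ?_⟩
    · rw [Finset.card_image_of_injective _ g.2.injective, card_univ, Fintype.card_fin]
    · rintro ⟨g, hg⟩
      apply Subtype.ext
      exact (Finset.orderEmbOfFin_unique _ (fun x => mem_image_of_mem _ (mem_univ x)) hg).symm
    · rintro ⟨s, hs⟩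
      apply Subtype.ext
      apply Finset.coe_injective
      rw [coe_image, coe_univ, Set.image_univ, Finset.range_orderEmbOfFin]
  rw [Nat.card_congr e, Nat.card_eq_fintype_card, Fintype.card_finset_len, Fintype.card_fin]

/-- counting weakly increasing chains with strictness enforced on `S` -/
lemma card_chains {n : ℕ} (t : ℕ) (S : Finset (Fin n)) :
    Nat.card {a : Fin (n+1) → Fin t //
        Monotone a ∧ ∀ i : Fin n, i ∈ S → a i.castSucc < a i.succ}
      = (t + Sᶜ.card).choose (n+1) := by
  classical
  set W := Sᶜ with hW
  have hmem : ∀ i : Fin n, i ∈ S ↔ i ∉ W := by intro i; simp [hW]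
  have e : {a : Fin (n+1) → Fin t //
        Monotone a ∧ ∀ i : Fin n, i ∈ S → a i.castSucc < a i.succ}
      ≃ {g : Fin (n+1) → Fin (t + W.card) // StrictMono g} := by
    refine ⟨fun a => ⟨fun i => ⟨(a.1 i : ℕ) + cgt W i, ?_⟩, ?_⟩,
      fun g => ⟨fun i => ⟨(g.1 i : ℕ) - cgt W i, ?_⟩, ?_, ?_⟩, ?_, ?_⟩
    · have h1 := (a.1 i).isLt
      have h2 := cgt_le W i
      omega
    · -- strict mono
      rw [Fin.strictMono_iff_lt_succ]
      intro i
      have hc := cgt_succ W i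
      rcases a with ⟨a, ha, hstr⟩
      rw [Fin.lt_def]
      show (a i.castSucc : ℕ) + cgt W i.castSucc < (a i.succ : ℕ) + cgt W i.succ
      by_cases hi : i ∈ W
      · have h1 : (a i.castSucc : ℕ) ≤ (a i.succ : ℕ) := ha (Fin.castSucc_lt_succ (i := i)).le
        rw [hc, if_pos hi]
        omega
      · have h1 : (a i.castSucc : ℕ) < (a i.succ : ℕ) := hstr i ((hmem i).mpr hi)
        rw [hc, if_neg hi]
        omega
    · -- bound for inverse value
      have h1 := (g.1 i).isLt
      have h2 := cgt_le_self W i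
      have h3 := strictMono_gap g.2 (i := i) (j := Fin.last n) (Fin.le_last i)
      have h4 := cgt_ge W i
      have h5 := (g.1 (Fin.last n)).isLt
      simp only [Fin.val_last] at h3
      have h6 := i.isLt
      have h7 : W.card ≤ n := by
        have := Finset.card_le_univ W
        simpa using this
      have h8 := strictMono_le_apply g.2 (Fin.last n)
      simp only [Fin.val_last] at h8
      have h9 : (i:ℕ) ≤ n := by omega
      have h10 : n - (i:ℕ) + (i:ℕ) = n := by omega
      omega
    · -- monotone
      rw [Fin.monotone_iff_le_succ]
      intro i
      have hc := cgt_succ W i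
      have hlt : (g.1 i.castSucc : ℕ) < (g.1 i.succ : ℕ) := g.2 (Fin.castSucc_lt_succ (i := i))
      have h2 := cgt_le_self W i.castSucc
      have h3 := strictMono_le_apply g.2 i.castSucc
      rw [Fin.le_def]
      show (g.1 i.castSucc : ℕ) - cgt W i.castSucc ≤ (g.1 i.succ : ℕ) - cgt W i.succ
      by_cases hi : i ∈ W
      · rw [hc, if_pos hi]; omega
      · rw [hc, if_neg hi]; omega
    · -- strictness at S
      intro i hi
      have hiW := (hmem i).mp hi
      have hc := cgt_succ W i
      have hlt : (g.1 i.castSucc : ℕ) < (g.1 i.succ : ℕ) := g.2 (Fin.castSucc_lt_succ (i := i))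
      have h2 := cgt_le_self W i.castSucc
      have h3 := strictMono_le_apply g.2 i.castSucc
      rw [Fin.lt_def]
      show (g.1 i.castSucc : ℕ) - cgt W i.castSucc < (g.1 i.succ : ℕ) - cgt W i.succ
      rw [hc, if_neg hiW]
      omega
    · rintro ⟨a, ha⟩
      apply Subtype.ext
      funext i
      apply Fin.ext
      show ((a i : ℕ) + cgt W i) - cgt W i = (a i : ℕ)
      omega
    · rintro ⟨g, hg⟩
      apply Subtype.ext
      funext i
      apply Fin.ext
      have h2 := cgt_le_self W i
      have h4 : cgt W i ≤ (g i : ℕ) := le_trans (cgt_le_self W i) (strictMono_le_apply hg i)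
      show ((g i : ℕ) - cgt W i) + cgt W i = (g i : ℕ)
      omega
  rw [Nat.card_congr e, card_strictMono]


/-- sorting permutation with ties broken in decreasing index order -/
def sortRev {m : ℕ} {α : Type*} [LinearOrder α] (f : Fin m → α) : Equiv.Perm (Fin m) :=
  (Tuple.sort (f ∘ ⇑(Fin.revPerm : Equiv.Perm (Fin m)))).trans Fin.revPerm

lemma eq_sortRev_iff {m : ℕ} {α : Type*} [LinearOrder α] {f : Fin m → α}
    {σ : Equiv.Perm (Fin m)} :
    σ = sortRev f ↔ Monotone (f ∘ ⇑σ) ∧ ∀ i j, i < j → f (σ i) = f (σ j) → σ j < σ i := by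
  have hcomp : (f ∘ ⇑(Fin.revPerm : Equiv.Perm (Fin m))) ∘ ⇑(σ.trans Fin.revPerm) = f ∘ ⇑σ := by
    funext x
    simp [Fin.rev_rev]
  have key : σ = sortRev f ↔
      σ.trans Fin.revPerm = Tuple.sort (f ∘ ⇑(Fin.revPerm : Equiv.Perm (Fin m))) := by
    constructor
    · intro h
      subst h
      ext x
      simp [sortRev, Fin.rev_rev]
    · intro h
      ext x
      have hx := congrFun (congrArg (fun (e : Equiv.Perm (Fin m)) => ⇑e) h) x
      simp only [Equiv.trans_apply, Fin.revPerm_apply] at hx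
      simp [sortRev, ← hx, Fin.rev_rev]
  rw [key, Tuple.eq_sort_iff]
  constructor
  · rintro ⟨h1, h2⟩
    refine ⟨by rwa [hcomp] at h1, fun i j hij hf => ?_⟩
    have := h2 i j hij (by
      simp only [Function.comp_apply, Equiv.trans_apply, Fin.revPerm_apply, Fin.rev_rev]
      exact hf)
    simp only [Equiv.trans_apply, Fin.revPerm_apply] at this
    exact (Fin.rev_lt_rev).mp this
  · rintro ⟨h1, h2⟩
    refine ⟨by rwa [hcomp], fun i j hij hf => ?_⟩
    have hf' : f (σ i) = f (σ j) := by
      have hi := congrFun hcomp i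
      have hj := congrFun hcomp j
      simp only [Function.comp_apply] at hi hj
      rw [← hi, ← hj]
      exact hf
    have := h2 i j hij hf'
    simp only [Equiv.trans_apply, Fin.revPerm_apply]
    exact (Fin.rev_lt_rev).mpr this

section Main

variable {n : ℕ} {r : Fin (n+1) → Fin (n+1) → Prop}

/-- descent set of a permutation -/
def des (w : Equiv.Perm (Fin (n+1))) : Finset (Fin n) :=
  Finset.univ.filter (fun i => w i.succ < w i.castSucc)

lemma des_card_le (w : Equiv.Perm (Fin (n+1))) : (des w).card ≤ n := by
  have := Finset.card_le_univ (des w)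
  simpa using this

/-- an increasing walk along non-descents -/
lemma walk_lt {w : Equiv.Perm (Fin (n+1))} {a : Fin (n+1) → Fin t}
    (ha : Monotone a) {i j : Fin (n+1)} (hij : i < j)
    (hstep : ∀ k : Fin n, i ≤ k.castSucc → k.succ ≤ j →
      a k.castSucc = a k.succ → w k.castSucc < w k.succ) (haij : a i = a j) :
    w i < w j := by
  have := chain_rel (fun x y => x < y ∧ w x < w y)
    (fun x y z hxy hyz => ⟨hxy.1.trans hyz.1, hxy.2.trans hyz.2⟩) hij
    (fun k hk1 hk2 => by
      refine ⟨Fin.castSucc_lt_succ (i := k), hstep k hk1 hk2 ?_⟩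
      have h1 : a i ≤ a k.castSucc := ha hk1
      have h2 : a k.castSucc ≤ a k.succ := ha (Fin.castSucc_lt_succ (i := k)).le
      have h3 : a k.succ ≤ a j := ha hk2
      rw [haij] at h1
      exact le_antisymm h2 (h3.trans h1))
  exact this.2

/-- a strict increase somewhere along the walk -/
lemma walk_strict {w : Equiv.Perm (Fin (n+1))} {a : Fin (n+1) → Fin t}
    (ha : Monotone a) {i j : Fin (n+1)} (hij : i < j)
    (hstep : ∀ k : Fin n, a k.castSucc < a k.succ ∨ w k.succ < w k.castSucc)
    (hw : w i ≤ w j) : a i < a j := by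
  have := chain_rel (fun x y => x < y ∧ (a x < a y ∨ w y < w x))
    (fun x y z hxy hyz => by
      refine ⟨hxy.1.trans hyz.1, ?_⟩
      rcases hxy.2 with h1 | h1
      · exact Or.inl (h1.trans_le (ha hyz.1.le))
      · rcases hyz.2 with h2 | h2
        · exact Or.inl ((ha hxy.1.le).trans_lt h2)
        · exact Or.inr (h2.trans h1)) hij
    (fun k _ _ => ⟨Fin.castSucc_lt_succ (i := k), hstep k⟩)
  rcases this.2 with h | h
  · exact h
  · exact absurd hw (not_le.mpr h)


/-- a decreasing walk along descents -/
lemma walk_gt {w : Equiv.Perm (Fin (n+1))} {a : Fin (n+1) → Fin t}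
    (ha : Monotone a) {i j : Fin (n+1)} (hij : i < j)
    (hstep : ∀ k : Fin n, i ≤ k.castSucc → k.succ ≤ j →
      a k.castSucc = a k.succ → w k.succ < w k.castSucc) (haij : a i = a j) :
    w j < w i := by
  have := chain_rel (fun x y => x < y ∧ w y < w x)
    (fun x y z hxy hyz => ⟨hxy.1.trans hyz.1, hyz.2.trans hxy.2⟩) hij
    (fun k hk1 hk2 => by
      refine ⟨Fin.castSucc_lt_succ (i := k), hstep k hk1 hk2 ?_⟩
      have h1 : a i ≤ a k.castSucc := ha hk1
      have h2 : a k.castSucc ≤ a k.succ := ha (Fin.castSucc_lt_succ (i := k)).le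
      have h3 : a k.succ ≤ a j := ha hk2
      rw [haij] at h1
      exact le_antisymm h2 (h3.trans h1))
  exact this.2

open scoped Classical in
lemma countW (hnat : ∀ x y, r x y → x ≤ y) (t : ℕ) :
    orderPoly (n+1) r t = ∑ w ∈ Finset.univ.filter
      (fun w : Equiv.Perm (Fin (n+1)) => ∀ i j, r (w i) (w j) → i ≤ j),
      (t + ((des w)ᶜ).card).choose (n+1) := by
  classical
  rw [orderPoly, Nat.card_eq_fintype_card, Fintype.card_subtype]
  have hL : ∀ f ∈ Finset.univ.filter
      (fun f : Fin (n+1) → Fin t => ∀ i j, r i j → f i ≤ f j),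
      Tuple.sort f ∈ Finset.univ.filter
        (fun w : Equiv.Perm (Fin (n+1)) => ∀ i j, r (w i) (w j) → i ≤ j) := by
    intro f hf
    simp only [Finset.mem_filter, Finset.mem_univ, true_and] at hf ⊢
    intro i j hrij
    obtain ⟨hm, hties⟩ := Tuple.eq_sort_iff.mp (rfl : Tuple.sort f = Tuple.sort f)
    by_contra hij
    push_neg at hij
    have h1 : f (Tuple.sort f j) ≤ f (Tuple.sort f i) := hm hij.le
    have h2 : f (Tuple.sort f i) ≤ f (Tuple.sort f j) := hf _ _ hrij
    have h3 := hties j i hij (le_antisymm h1 h2)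
    exact absurd (hnat _ _ hrij) (not_le.mpr h3)
  rw [Finset.card_eq_sum_card_fiberwise hL]
  apply Finset.sum_congr rfl
  intro w hw
  simp only [Finset.mem_filter, Finset.mem_univ, true_and] at hw
  rw [Finset.filter_filter, ← Fintype.card_subtype, ← Nat.card_eq_fintype_card,
    ← card_chains t (des w)]
  apply Nat.card_congr
  refine ⟨fun f => ⟨f.1 ∘ ⇑w, ?_, ?_⟩, fun a => ⟨a.1 ∘ ⇑w.symm, ?_, ?_⟩, ?_, ?_⟩
  · obtain ⟨hm, hties⟩ := Tuple.eq_sort_iff.mp f.2.2.symm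
    exact hm
  · obtain ⟨hm, hties⟩ := Tuple.eq_sort_iff.mp f.2.2.symm
    intro i hi
    simp only [des, Finset.mem_filter, Finset.mem_univ, true_and] at hi
    refine lt_of_le_of_ne (hm (Fin.castSucc_lt_succ (i := i)).le) ?_
    intro heq
    exact absurd (hties i.castSucc i.succ (Fin.castSucc_lt_succ (i := i)) heq) (lt_asymm hi)
  · intro i j hrij
    exact a.2.1 (hw _ _ (by simpa using hrij))
  · refine (Tuple.eq_sort_iff.mpr ⟨?_, ?_⟩).symm
    · have hcomp : (a.1 ∘ ⇑w.symm) ∘ ⇑w = a.1 := by funext x; simp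
      rw [hcomp]
      exact a.2.1
    · intro i j hij heq
      simp only [Function.comp_apply, Equiv.symm_apply_apply] at heq
      refine walk_lt a.2.1 hij (fun k hk1 hk2 hak => ?_) heq
      by_contra hlt
      push_neg at hlt
      have hlt2 : w k.succ < w k.castSucc :=
        lt_of_le_of_ne hlt (fun h => (Fin.castSucc_lt_succ (i := k)).ne' (w.injective h))
      have hk : k ∈ des w := by
        simp only [des, Finset.mem_filter, Finset.mem_univ, true_and]
        exact hlt2
      have := a.2.2 k hk
      rw [hak] at this
      exact lt_irrefl _ this
  · rintro ⟨f, hf⟩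
    apply Subtype.ext
    funext x
    simp
  · rintro ⟨a, ha⟩
    apply Subtype.ext
    funext x
    simp


open scoped Classical in
lemma countS (hnat : ∀ x y, r x y → x ≤ y) (t : ℕ) :
    strictOrderPoly (n+1) r t = ∑ w ∈ Finset.univ.filter
      (fun w : Equiv.Perm (Fin (n+1)) => ∀ i j, r (w i) (w j) → i ≤ j),
      (t + (des w).card).choose (n+1) := by
  classical
  rw [strictOrderPoly, Nat.card_eq_fintype_card, Fintype.card_subtype]
  have hL : ∀ f ∈ Finset.univ.filter
      (fun f : Fin (n+1) → Fin t => ∀ i j, r i j → i ≠ j → f i < f j),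
      sortRev f ∈ Finset.univ.filter
        (fun w : Equiv.Perm (Fin (n+1)) => ∀ i j, r (w i) (w j) → i ≤ j) := by
    intro f hf
    simp only [Finset.mem_filter, Finset.mem_univ, true_and] at hf ⊢
    intro i j hrij
    obtain ⟨hm, hties⟩ := eq_sortRev_iff.mp (rfl : sortRev f = sortRev f)
    by_contra hij
    push_neg at hij
    rcases eq_or_ne (sortRev f i) (sortRev f j) with he | hne
    · exact hij.ne ((sortRev f).injective he).symm
    · have h1 : f (sortRev f i) < f (sortRev f j) := hf _ _ hrij hne
      have h2 : f (sortRev f j) ≤ f (sortRev f i) := hm hij.le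
      exact absurd h1 (not_lt.mpr h2)
  rw [Finset.card_eq_sum_card_fiberwise hL]
  apply Finset.sum_congr rfl
  intro w hw
  simp only [Finset.mem_filter, Finset.mem_univ, true_and] at hw
  rw [Finset.filter_filter, ← Fintype.card_subtype, ← Nat.card_eq_fintype_card]
  have hcompl : (t + (des w).card).choose (n+1) = (t + ((des w)ᶜ)ᶜ.card).choose (n+1) := by
    rw [compl_compl]
  rw [hcompl, ← card_chains t ((des w)ᶜ)]
  apply Nat.card_congr
  refine ⟨fun f => ⟨f.1 ∘ ⇑w, ?_, ?_⟩, fun a => ⟨a.1 ∘ ⇑w.symm, ?_, ?_⟩, ?_, ?_⟩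
  · obtain ⟨hm, hties⟩ := eq_sortRev_iff.mp f.2.2.symm
    exact hm
  · obtain ⟨hm, hties⟩ := eq_sortRev_iff.mp f.2.2.symm
    intro i hi
    rw [Finset.mem_compl] at hi
    simp only [des, Finset.mem_filter, Finset.mem_univ, true_and, not_lt] at hi
    refine lt_of_le_of_ne (hm (Fin.castSucc_lt_succ (i := i)).le) ?_
    intro heq
    have := hties i.castSucc i.succ (Fin.castSucc_lt_succ (i := i)) heq
    exact absurd this (not_lt.mpr hi)
  · intro i j hrij hne
    have hij : w.symm i ≤ w.symm j := hw _ _ (by simpa using hrij)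
    have hij' : w.symm i < w.symm j :=
      lt_of_le_of_ne hij (fun h => hne (by rw [← w.apply_symm_apply i, h, w.apply_symm_apply]))
    refine walk_strict (w := w) a.2.1 hij' (fun k => ?_) ?_
    · by_cases hk : k ∈ des w
      · simp only [des, Finset.mem_filter, Finset.mem_univ, true_and] at hk
        exact Or.inr hk
      · exact Or.inl (a.2.2 k (Finset.mem_compl.mpr hk))
    · simpa using hnat _ _ hrij
  · refine (eq_sortRev_iff.mpr ⟨?_, ?_⟩).symm
    · have hcomp : (a.1 ∘ ⇑w.symm) ∘ ⇑w = a.1 := by funext x; simp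
      rw [hcomp]
      exact a.2.1
    · intro i j hij heq
      simp only [Function.comp_apply, Equiv.symm_apply_apply] at heq
      refine walk_gt a.2.1 hij (fun k hk1 hk2 hak => ?_) heq
      by_contra hlt
      push_neg at hlt
      have hlt2 : w k.castSucc < w k.succ :=
        lt_of_le_of_ne hlt (fun h => (Fin.castSucc_lt_succ (i := k)).ne (w.injective h))
      have hk : k ∈ (des w)ᶜ := by
        rw [Finset.mem_compl]
        simp only [des, Finset.mem_filter, Finset.mem_univ, true_and, not_lt]
        exact hlt2.le
      have := a.2.2 k hk
      rw [hak] at this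
      exact lt_irrefl _ this
  · rintro ⟨f, hf⟩
    apply Subtype.ext
    funext x
    simp
  · rintro ⟨a, ha⟩
    apply Subtype.ext
    funext x
    simp

open Polynomial in
open scoped Classical in
theorem main_natural (hnat : ∀ x y, r x y → x ≤ y) (q : Polynomial ℝ)
    (hq : ∀ t : ℕ, 1 ≤ t → q.eval (t : ℝ) = (orderPoly (n+1) r t : ℝ)) :
    ∀ t : ℕ, 1 ≤ t →
      q.eval (-(t : ℝ)) = (-1 : ℝ) ^ (n+1) * (strictOrderPoly (n+1) r t : ℝ) := by
  classical
  set L := Finset.univ.filter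
    (fun w : Equiv.Perm (Fin (n+1)) => ∀ i j, r (w i) (w j) → i ≤ j) with hLdef
  set Q : Polynomial ℝ := ∑ w ∈ L, Polynomial.C (((n+1).factorial : ℝ))⁻¹ *
    ((descPochhammer ℝ (n+1)).comp
      (Polynomial.X + Polynomial.C ((((des w)ᶜ).card : ℕ) : ℝ))) with hQdef
  have hfac : ((n+1).factorial : ℝ) ≠ 0 := Nat.cast_ne_zero.mpr (Nat.factorial_ne_zero _)
  have hQeval : ∀ t : ℕ, Q.eval (t : ℝ) = (orderPoly (n+1) r t : ℝ) := by
    intro t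
    rw [countW hnat t, hQdef, Polynomial.eval_finset_sum, Nat.cast_sum]
    apply Finset.sum_congr rfl
    intro w hw
    rw [Polynomial.eval_mul, Polynomial.eval_C, Polynomial.eval_comp, Polynomial.eval_add,
      Polynomial.eval_X, Polynomial.eval_C]
    have hcast : ((t:ℝ) + ((((des w)ᶜ).card : ℕ) : ℝ)) = (((t + ((des w)ᶜ).card : ℕ)) : ℝ) := by
      push_cast; ring
    rw [hcast, descPochhammer_eval_eq_descFactorial,
      Nat.descFactorial_eq_factorial_mul_choose]
    push_cast
    rw [← mul_assoc, inv_mul_cancel₀ hfac, one_mul]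
  have hqQ : q = Q := by
    apply Polynomial.eq_of_infinite_eval_eq
    apply Set.infinite_of_injective_forall_mem (f := fun k : ℕ => ((k+1 : ℕ) : ℝ))
    · intro a b hab
      simp only [Nat.cast_add, Nat.cast_one] at hab
      exact_mod_cast add_right_cancel hab
    · intro k
      simp only [Set.mem_setOf_eq]
      rw [hq (k+1) (by omega), hQeval (k+1)]
  intro t ht
  rw [hqQ, countS hnat t, hQdef, Polynomial.eval_finset_sum, Nat.cast_sum, Finset.mul_sum]
  apply Finset.sum_congr rfl
  intro w hw
  rw [Polynomial.eval_mul, Polynomial.eval_C, Polynomial.eval_comp, Polynomial.eval_add,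
    Polynomial.eval_X, Polynomial.eval_C]
  have hd : (des w).card + ((des w)ᶜ).card = n := by
    have h1 := des_card_le w
    rw [Finset.card_compl]
    simp only [Fintype.card_fin]
    omega
  have harg : (-(t:ℝ) + ((((des w)ᶜ).card : ℕ) : ℝ)) - ((n+1 : ℕ) : ℝ) + 1
      = -(((t + (des w).card : ℕ)) : ℝ) := by
    have : ((((des w)ᶜ).card : ℕ) : ℝ) + ((des w).card : ℝ) = (n : ℝ) := by
      exact_mod_cast congrArg (Nat.cast : ℕ → ℝ) (by omega : ((des w)ᶜ).card + (des w).card = n)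
    push_cast at this ⊢
    linarith
  rw [descPochhammer_eval_eq_ascPochhammer, harg,
    ascPochhammer_eval_neg_eq_descPochhammer, descPochhammer_eval_eq_descFactorial,
    Nat.descFactorial_eq_factorial_mul_choose]
  push_cast
  field_simp

end Main

/-- type synonym to carry the partial order `r` -/
def Wrap (p : ℕ) : Type := Fin p

instance (p : ℕ) : Fintype (Wrap p) := inferInstanceAs (Fintype (Fin p))

lemma exists_relabel (p : ℕ) (r : Fin p → Fin p → Prop) (hr : IsPartialOrder (Fin p) r) :
    ∃ σ : Equiv.Perm (Fin p), ∀ x y, r (σ x) (σ y) → x ≤ y := by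
  letI : PartialOrder (Wrap p) :=
    { le := fun x y => r x y
      le_refl := fun x => hr.refl x
      le_trans := fun x y z h1 h2 => hr.trans x y z h1 h2
      le_antisymm := fun x y h1 h2 => hr.antisymm x y h1 h2 }
  letI : Fintype (LinearExtension (Wrap p)) := inferInstanceAs (Fintype (Fin p))
  have hcard : Fintype.card (LinearExtension (Wrap p)) = p := Fintype.card_fin p
  let e := monoEquivOfFin (LinearExtension (Wrap p)) hcard
  refine ⟨⟨fun i => e i, fun x => e.symm x,
    fun i => e.symm_apply_apply i, fun x => e.apply_symm_apply x⟩, ?_⟩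
  intro x y hxy
  have hab : @LE.le (Wrap p) _ (e x) (e y) := hxy
  have h1 := toLinearExtension.monotone hab
  have h2 : e x ≤ e y := h1
  exact e.le_iff_le.mp h2

lemma orderPoly_relabel (p : ℕ) (r : Fin p → Fin p → Prop) (σ : Equiv.Perm (Fin p)) (t : ℕ) :
    orderPoly p (fun x y => r (σ x) (σ y)) t = orderPoly p r t := by
  apply Nat.card_congr
  refine ⟨fun f => ⟨f.1 ∘ ⇑σ.symm, fun i j hij => f.2 (σ.symm i) (σ.symm j) (by simpa using hij)⟩,
    fun f => ⟨f.1 ∘ ⇑σ, fun i j hij => f.2 (σ i) (σ j) hij⟩, ?_, ?_⟩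
  · rintro ⟨f, hf⟩; apply Subtype.ext; funext x; simp
  · rintro ⟨f, hf⟩; apply Subtype.ext; funext x; simp

lemma strictOrderPoly_relabel (p : ℕ) (r : Fin p → Fin p → Prop) (σ : Equiv.Perm (Fin p))
    (t : ℕ) :
    strictOrderPoly p (fun x y => r (σ x) (σ y)) t = strictOrderPoly p r t := by
  apply Nat.card_congr
  refine ⟨fun f => ⟨f.1 ∘ ⇑σ.symm, fun i j hij hne => f.2 (σ.symm i) (σ.symm j)
      (by simpa using hij) (fun h => hne (by rw [← σ.apply_symm_apply i, h, σ.apply_symm_apply]))⟩,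
    fun f => ⟨f.1 ∘ ⇑σ, fun i j hij hne => f.2 (σ i) (σ j) hij
      (fun h => hne (σ.injective h))⟩, ?_, ?_⟩
  · rintro ⟨f, hf⟩; apply Subtype.ext; funext x; simp
  · rintro ⟨f, hf⟩; apply Subtype.ext; funext x; simp

end OPR


/-- order polynomial reciprocity: if a polynomial `q` agrees with
`Ω_P(t)` for all positive integers `t`, then `q(-t) = (-1)^p Ω̄_P(t)`. -/
theorem order_polynomial_reciprocity (p : ℕ) (r : Fin p → Fin p → Prop)
    (hr : IsPartialOrder (Fin p) r) (q : Polynomial ℝ)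
    (hq : ∀ t : ℕ, 1 ≤ t → q.eval (t : ℝ) = (orderPoly p r t : ℝ)) :
    ∀ t : ℕ, 1 ≤ t →
      q.eval (-(t : ℝ)) = (-1 : ℝ) ^ p * (strictOrderPoly p r t : ℝ) := by
  intro t ht
  cases p with
  | zero =>
    have hone : ∀ s : ℕ, (orderPoly 0 r s : ℝ) = 1 := by
      intro s
      rw [orderPoly]
      haveI : Unique {f : Fin 0 → Fin s // ∀ i j, r i j → f i ≤ f j} :=
        ⟨⟨⟨fun i => i.elim0, fun i _ _ => i.elim0⟩⟩,
          fun a => Subtype.ext (funext fun i => i.elim0)⟩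
      rw [Nat.card_unique]
      norm_num
    have hone' : strictOrderPoly 0 r t = 1 := by
      rw [strictOrderPoly]
      haveI : Unique {f : Fin 0 → Fin t // ∀ i j, r i j → i ≠ j → f i < f j} :=
        ⟨⟨⟨fun i => i.elim0, fun i _ _ _ => i.elim0⟩⟩,
          fun a => Subtype.ext (funext fun i => i.elim0)⟩
      exact Nat.card_unique
    have hq1 : q = Polynomial.C (1:ℝ) := by
      apply Polynomial.eq_of_infinite_eval_eq
      apply Set.infinite_of_injective_forall_mem (f := fun k : ℕ => ((k+1:ℕ) : ℝ))
      · intro a b hab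
        simp only [Nat.cast_add, Nat.cast_one] at hab
        exact_mod_cast add_right_cancel hab
      · intro k
        simp only [Set.mem_setOf_eq, Polynomial.eval_C]
        rw [hq (k+1) (by omega), hone]
    rw [hq1]
    simp [hone']
  | succ n =>
    obtain ⟨σ, hσ⟩ := OPR.exists_relabel (n+1) r hr
    have hq' : ∀ s : ℕ, 1 ≤ s →
        q.eval (s:ℝ) = (orderPoly (n+1) (fun x y => r (σ x) (σ y)) s : ℝ) := by
      intro s hs
      rw [hq s hs, OPR.orderPoly_relabel]
    have hmain := OPR.main_natural (r := fun x y => r (σ x) (σ y)) hσ q hq' t ht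
    rw [hmain, OPR.strictOrderPoly_relabel]
end
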